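/- arXiv:1508.03258 — 9 statements merged into one kernel-verified Lean document; each statement's English description precedes it below -/
import Mathlib

section
/- Let n and m be coprime non-negative integers with h = n + m ≥ 1, and let C be a beginning of a semi-module of type (n,m). The map σ : C → C defined by σ(i) = i + n if i + n ∈ C and σ(i) = i − m otherwise is a bijection of C whose h-th iterate is the identity, and the cyclic group generated by σ acts transitively on C (i.e. σ is a single h-cycle on C). -/
/-- `C` is a beginning of a semi-module of type `(n,m)`. -/
def IsBeginning (n m : ℕ) (C : Set ℤ) : Prop :=
  (∀ i : ℤ, ∃! j : ℤ, j ∈ C ∧ ((n : ℤ) + m) ∣ (j - i)) ∧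
  ∀ i ∈ C, i + n ∈ C ∨ i - m ∈ C

theorem stmt3 (n m : ℕ) (hcop : Nat.Coprime n m) (h : ℕ) (hh : h = n + m)
    (hh1 : 1 ≤ h) (C : Set ℤ) (hC : IsBeginning n m C)
    (s : ℤ → ℤ)
    (hs : ∀ i ∈ C, (i + n ∈ C → s i = i + n) ∧ (i + n ∉ C → s i = i - m)) :
    Set.BijOn s C C ∧ (∀ j ∈ C, s^[h] j = j) ∧
      ∀ i ∈ C, ∀ j ∈ C, ∃ k : ℕ, s^[k] i = j := by
  obtain ⟨huniq, hstep⟩ := hC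
  have hZ : ((n:ℤ) + m) = (h:ℤ) := by rw [hh]; push_cast; ring
  have uniq : ∀ a ∈ C, ∀ b ∈ C, (h:ℤ) ∣ (a - b) → a = b := by
    intro a ha b hb hd
    obtain ⟨j, _, hj2⟩ := huniq b
    rw [hj2 a ⟨ha, by rw [hZ]; exact hd⟩, hj2 b ⟨hb, by simp⟩]
  have key : ∀ i ∈ C, s i ∈ C ∧ (h:ℤ) ∣ (s i - (i + n)) := by
    intro i hi
    obtain ⟨h1, h2⟩ := hs i hi
    by_cases hc : i + n ∈ C
    · rw [h1 hc]; exact ⟨hc, by simp⟩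
    · rw [h2 hc]
      rcases hstep i hi with h' | h'
      · exact absurd h' hc
      · exact ⟨h', ⟨-1, by rw [hh]; push_cast; ring⟩⟩
  have iter : ∀ k : ℕ, ∀ i ∈ C, s^[k] i ∈ C ∧ (h:ℤ) ∣ (s^[k] i - (i + k * n)) := by
    intro k
    induction k with
    | zero => intro i hi; exact ⟨hi, by simp⟩
    | succ k ih =>
      intro i hi
      obtain ⟨h1, h2⟩ := ih i hi
      obtain ⟨h3, h4⟩ := key _ h1
      rw [Function.iterate_succ_apply']
      refine ⟨h3, ?_⟩
      have heq : s (s^[k] i) - (i + ((k:ℤ)+1) * n)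
          = (s (s^[k] i) - (s^[k] i + n)) + (s^[k] i - (i + k*n)) := by ring
      push_cast
      rw [heq]
      exact dvd_add h4 h2
  have period : ∀ j ∈ C, s^[h] j = j := by
    intro j hj
    obtain ⟨h1, h2⟩ := iter h j hj
    refine uniq _ h1 _ hj ?_
    have : (h:ℤ) ∣ ((j + h * n) - j) := ⟨n, by ring⟩
    have h3 := dvd_add h2 this
    have heq : (s^[h] j - (j + (h:ℤ) * n)) + ((j + (h:ℤ) * n) - j) = s^[h] j - j := by ring
    rwa [heq] at h3
  refine ⟨⟨?_, ?_, ?_⟩, period, ?_⟩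
  · intro i hi; exact (key i hi).1
  · intro a ha b hb hab
    obtain ⟨_, h2⟩ := key a ha
    obtain ⟨_, h4⟩ := key b hb
    refine uniq a ha b hb ?_
    have : (h:ℤ) ∣ ((s b - (b + n)) - (s a - (a + n))) := dvd_sub h4 h2
    rw [hab] at this
    have heq : (s b - (b + (n:ℤ))) - (s b - (a + n)) = a - b := by ring
    rwa [heq] at this
  · intro j hj
    obtain ⟨k, hk⟩ : ∃ k : ℕ, h = k + 1 := ⟨h - 1, by omega⟩
    have h1 := (iter k j hj).1
    refine ⟨s^[k] j, h1, ?_⟩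
    have := period j hj
    rwa [hk, Function.iterate_succ_apply'] at this
  · intro i hi j hj
    have hco : IsCoprime (n:ℤ) (h:ℤ) := by
      rw [Int.isCoprime_iff_gcd_eq_one]
      have : Nat.Coprime n h := by
        rw [hh]
        exact Nat.coprime_self_add_right.mpr hcop
      exact_mod_cast this
    obtain ⟨a, b, hab⟩ := hco
    set k0 : ℤ := a * (j - i) with hk0
    have hd0 : (h:ℤ) ∣ (i + k0 * n - j) := ⟨-b * (j - i), by linear_combination (j - i) * hab⟩
    have hmodnn : 0 ≤ k0 % h := Int.emod_nonneg k0 (by positivity)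
    refine ⟨(k0 % h).toNat, ?_⟩
    have hkc : ((k0 % h).toNat : ℤ) = k0 % h := Int.toNat_of_nonneg hmodnn
    obtain ⟨h1, h2⟩ := iter (k0 % h).toNat i hi
    refine uniq _ h1 _ hj ?_
    have hd1 : (h:ℤ) ∣ (k0 - k0 % h) := ⟨k0 / h, by rw [Int.emod_def]; ring⟩
    have hd2 : (h:ℤ) ∣ (i + (k0 % h) * n - j) := by
      have := dvd_sub hd0 (hd1.mul_right (n:ℤ))
      have heq : (i + k0 * n - j) - (k0 - k0 % h) * n = i + (k0 % h) * n - j := by ring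
      rwa [heq] at this
    rw [hkc] at h2
    have := dvd_add h2 hd2
    have heq : (s^[(k0 % h).toNat] i - (i + k0 % h * n)) + (i + k0 % h * n - j)
        = s^[(k0 % h).toNat] i - j := by ring
    rwa [heq] at this
end

section
/- Let n and m be coprime non-negative integers with h = n + m ≥ 1, and let C be a beginning of a semi-module of type (n,m). Then the set {j ∈ C : j + n ∈ C} has exactly m elements and the set {j ∈ C : j − m ∈ C} has exactly n elements. -/
theorem stmt5 (n m : ℕ) (hcop : Nat.Coprime n m) (h : ℕ) (hh : h = n + m)
    (hh1 : 1 ≤ h) (C : Set ℤ) (hC : IsBeginning n m C) :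
    {j ∈ C | j + n ∈ C}.ncard = m ∧ {j ∈ C | j - m ∈ C}.ncard = n := by
  classical
  set H : ℤ := (n : ℤ) + m with hH
  have hHh : H = (h : ℤ) := by rw [hh]; push_cast; ring
  have hHpos : 0 < H := by rw [hHh]; exact_mod_cast hh1
  -- choice function
  have hex : ∀ i : ℤ, ∃ j : ℤ, (j ∈ C ∧ H ∣ (j - i)) ∧
      ∀ y : ℤ, (y ∈ C ∧ H ∣ (y - i)) → y = j := fun i => hC.1 i
  choose r hr hru using hex
  have hrC : ∀ i, r i ∈ C := fun i => (hr i).1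
  have hrd : ∀ i, H ∣ (r i - i) := fun i => (hr i).2
  -- uniqueness in C
  have key : ∀ j j' : ℤ, j ∈ C → j' ∈ C → H ∣ (j - j') → j = j' := by
    intro j j' hj hj' hd
    have h1 : j = r j' := hru j' j ⟨hj, hd⟩
    have h2 : j' = r j' := hru j' j' ⟨hj', by simp⟩
    exact h1.trans h2.symm
  -- the finset of representatives
  set s : Finset ℤ := (Finset.Ico (0:ℤ) H).image r with hs
  have hCs : C = ↑s := by
    ext j
    simp only [hs, Finset.coe_image, Set.mem_image, Finset.coe_Ico, Set.mem_Ico]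
    constructor
    · intro hj
      refine ⟨j % H, ⟨Int.emod_nonneg j hHpos.ne', Int.emod_lt_of_pos j hHpos⟩, ?_⟩
      have hdvd : H ∣ (j - j % H) := ⟨j / H, by
        have := Int.mul_ediv_add_emod j H; linarith⟩
      exact (hru (j % H) j ⟨hj, hdvd⟩).symm
    · rintro ⟨i, _, rfl⟩; exact hrC i
  -- injectivity of r on Ico 0 H
  have hinj : Set.InjOn r (Finset.Ico (0:ℤ) H) := by
    intro i hi i' hi' he
    simp only [Finset.coe_Ico, Set.mem_Ico] at hi hi'
    have hd : H ∣ (i - i') := by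
      have d1 := hrd i
      have d2 := hrd i'
      rw [he] at d1
      have := dvd_sub d2 d1
      simpa using this
    have : i - i' = 0 := Int.eq_zero_of_abs_lt_dvd hd (by rw [abs_lt]; omega)
    omega
  have hscard : s.card = h := by
    rw [hs, Finset.card_image_of_injOn hinj, Int.card_Ico]
    rw [hHh]; simp
  -- the shift map
  set f : ℤ → ℤ := fun j => r (j + n) with hf
  have hfC : ∀ j, f j ∈ C := fun j => hrC _
  have hfinj : ∀ j ∈ s, ∀ j' ∈ s, f j = f j' → j = j' := by
    intro j hj j' hj' he
    have hjC : j ∈ C := hCs ▸ hj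
    have hj'C : j' ∈ C := hCs ▸ hj'
    have d1 := hrd (j + n)
    have d2 := hrd (j' + n)
    rw [hf] at he
    simp only at he
    rw [he] at d1
    have hd : H ∣ (j - j') := by
      have := dvd_sub d2 d1
      have h2 : r (j' + ↑n) - (j' + ↑n) - (r (j' + ↑n) - (j + ↑n)) = j - j' := by ring
      rwa [h2] at this
    exact key j j' hjC hj'C hd
  have himg : s.image f = s := by
    apply Finset.eq_of_subset_of_card_le
    · intro x hx
      simp only [Finset.mem_image] at hx
      obtain ⟨j, _, rfl⟩ := hx
      have : f j ∈ C := hfC j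
      rwa [hCs] at this
    · rw [Finset.card_image_of_injOn (fun a ha b hb => hfinj a ha b hb)]
  -- values of f
  have hfA : ∀ j ∈ C, j + n ∈ C → f j = j + n := by
    intro j hj hjn
    exact (hru (j + n) (j + n) ⟨hjn, by simp⟩).symm
  have hfB : ∀ j ∈ C, j - m ∈ C → f j = j - m := by
    intro j hj hjm
    refine (hru (j + n) (j - m) ⟨hjm, ⟨-1, by rw [hH]; ring⟩⟩).symm
  have hexcl : ∀ j ∈ C, ¬ (j + n ∈ C ∧ j - m ∈ C) := by
    rintro j hj ⟨h1, h2⟩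
    have := key (j + n) (j - m) h1 h2 ⟨1, by rw [hH]; ring⟩
    have hnm : (n : ℤ) + m = 0 := by linarith
    have : h = 0 := by rw [hh]; exact_mod_cast hnm
    omega
  -- the two filters
  set A : Finset ℤ := s.filter (fun j => j + n ∈ C) with hA
  set B : Finset ℤ := s.filter (fun j => j - m ∈ C) with hB
  have hdisj : Disjoint A B := by
    rw [Finset.disjoint_left]
    intro j hjA hjB
    simp only [hA, hB, Finset.mem_filter] at hjA hjB
    exact hexcl j (hCs ▸ hjA.1) ⟨hjA.2, hjB.2⟩
  have hunion : A ∪ B = s := by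
    ext j
    simp only [hA, hB, Finset.mem_union, Finset.mem_filter]
    constructor
    · rintro (hx | hx) <;> exact hx.1
    · intro hj
      rcases hC.2 j (hCs ▸ hj) with hx | hx
      · exact Or.inl ⟨hj, hx⟩
      · exact Or.inr ⟨hj, hx⟩
  have hcards : A.card + B.card = h := by
    rw [← hscard, ← hunion, Finset.card_union_of_disjoint hdisj]
  -- sum argument
  have hsum : ∑ j ∈ s, f j = ∑ j ∈ s, j := by
    have h1 : ∑ x ∈ Finset.image f s, x = ∑ j ∈ s, f j :=
      Finset.sum_image (f := fun x => x) (g := f) (fun a ha b hb => hfinj a ha b hb)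
    rw [← h1, himg]
  have hsplit : ∑ j ∈ s, f j = ∑ j ∈ A, f j + ∑ j ∈ B, f j := by
    rw [← Finset.sum_union hdisj, hunion]
  have hsA : ∑ j ∈ A, f j = ∑ j ∈ A, j + A.card * n := by
    rw [Finset.sum_congr rfl (fun j hj => by
      simp only [hA, Finset.mem_filter] at hj
      exact hfA j (hCs ▸ hj.1) hj.2)]
    rw [Finset.sum_add_distrib, Finset.sum_const, nsmul_eq_mul]
  have hsB : ∑ j ∈ B, f j = ∑ j ∈ B, j - B.card * m := by
    rw [Finset.sum_congr rfl (fun j hj => by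
      simp only [hB, Finset.mem_filter] at hj
      exact hfB j (hCs ▸ hj.1) hj.2)]
    rw [Finset.sum_sub_distrib, Finset.sum_const, nsmul_eq_mul]
  have hsplit2 : ∑ j ∈ s, j = ∑ j ∈ A, j + ∑ j ∈ B, j := by
    rw [← Finset.sum_union hdisj, hunion]
  have hbal : (A.card : ℤ) * n = (B.card : ℤ) * m := by
    have := hsum
    rw [hsplit, hsA, hsB, hsplit2] at this
    linarith
  -- conclude cardinalities
  have hAm : A.card = m := by
    have h1 : (A.card : ℤ) + B.card = (n : ℤ) + m := by
      have : ((A.card + B.card : ℕ) : ℤ) = (h : ℤ) := by exact_mod_cast hcards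
      push_cast at this; rw [← hHh, hH] at this; linarith [this]
    have h2 : ((n : ℤ) + m) * A.card = ((n : ℤ) + m) * m := by nlinarith [hbal]
    have h3 : (A.card : ℤ) = m := by
      have := mul_left_cancel₀ (by rw [← hH]; exact hHpos.ne') h2
      exact this
    exact_mod_cast h3
  have hBn : B.card = n := by omega
  -- translate to ncard
  have e1 : {j ∈ C | j + n ∈ C} = ↑A := by
    ext j
    simp only [Set.mem_setOf_eq, hA, Finset.coe_filter, Set.mem_setOf_eq, hCs,
      Finset.mem_coe]
  have e2 : {j ∈ C | j - m ∈ C} = ↑B := by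
    ext j
    simp only [Set.mem_setOf_eq, hB, Finset.coe_filter, Set.mem_setOf_eq, hCs,
      Finset.mem_coe]
  rw [e1, e2, Set.ncard_coe_finset, Set.ncard_coe_finset]
  exact ⟨hAm, hBn⟩
end

section
/- Let n and m be coprime positive integers and let C be a beginning of a semi-module of type (n,m). Then for each i ∈ C, exactly one of the two conditions 'i + n ∈ C' and 'i − m ∈ C' holds. -/
theorem stmt6 (n m : ℕ) (hn : 0 < n) (hm : 0 < m) (hcop : Nat.Coprime n m)
    (C : Set ℤ) (hC : IsBeginning n m C) :
    ∀ i ∈ C, Xor' (i + n ∈ C) (i - m ∈ C) := by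
  intro i hi
  have hnb : ¬ ((i + n ∈ C) ∧ (i - m ∈ C)) := by
    rintro ⟨h1, h2⟩
    obtain ⟨j, _, huniq⟩ := hC.1 (i + n)
    have e1 : i + n = j := huniq _ ⟨h1, by ring_nf; exact dvd_zero _⟩
    have e2 : i - m = j := huniq _ ⟨h2, ⟨-1, by ring⟩⟩
    have : (n : ℤ) + m = 0 := by omega
    omega
  rcases hC.2 i hi with h | h
  · exact Or.inl ⟨h, fun h' => hnb ⟨h, h'⟩⟩
  · exact Or.inr ⟨h, fun h' => hnb ⟨h', h⟩⟩
end

section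
/- Let n and m be coprime positive integers and let C be a beginning of a semi-module of type (n,m). Then every element of C lies in the interval [min C, min C + n·m]; in particular C ⊆ {min C, min C + 1, …, min C + n·m}. -/
theorem stmt7 (n m : ℕ) (hn : 0 < n) (hm : 0 < m) (hcop : Nat.Coprime n m)
    (C : Set ℤ) (hC : IsBeginning n m C) :
    ∀ a : ℤ, IsLeast C a → ∀ j ∈ C, j ∈ Set.Icc a (a + n * m) := by
  classical
  obtain ⟨hC1, hC2⟩ := hC
  intro a ha j hj
  have haC : a ∈ C := ha.1
  set s : ℕ := n + m with hs
  have hs0 : 0 < s := by omega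
  have hscast : ((n : ℤ) + m) = (s : ℤ) := by push_cast [hs]; ring
  rw [hscast] at hC1
  -- step function
  let f : ℤ → ℤ := fun i => if i + n ∈ C then i + n else i - m
  have hf : ∀ i ∈ C, f i ∈ C ∧ (f i = i + n ∨ f i = i - m) := by
    intro i hi
    by_cases h : i + n ∈ C
    · simp [f, h]
    · rcases hC2 i hi with h' | h'
      · exact absurd h' h
      · simp [f, h, h']
  set g : ℕ → ℤ := fun k => f^[k] a with hgdef
  have hg0 : g 0 = a := rfl
  have hgs : ∀ k, g (k + 1) = f (g k) := fun k => Function.iterate_succ_apply' f k a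
  -- counters (p, q) : number of +n steps and -m steps
  set pq : ℕ → ℕ × ℕ := fun k =>
    Nat.rec (0, 0) (fun k r => if g (k + 1) = g k + n then (r.1 + 1, r.2) else (r.1, r.2 + 1)) k
    with hpqdef
  have hpqs : ∀ k, pq (k + 1) =
      if g (k + 1) = g k + n then ((pq k).1 + 1, (pq k).2) else ((pq k).1, (pq k).2 + 1) :=
    fun k => rfl
  have key : ∀ k, g k ∈ C ∧ (pq k).1 + (pq k).2 = k ∧
      g k = a + (pq k).1 * n - (pq k).2 * m := by
    intro k
    induction k with
    | zero => refine ⟨haC, rfl, by simp [hg0, hpqdef]⟩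
    | succ k ih =>
      obtain ⟨h1, h2, h3⟩ := ih
      obtain ⟨hfc, hfe⟩ := hf (g k) h1
      rw [← hgs k] at hfc hfe
      rw [hpqs k]
      split_ifs with hcase
      · refine ⟨hfc, by simpa using by omega, ?_⟩
        rw [hcase, h3]; push_cast; ring
      · have hstep : g (k + 1) = g k - m := by tauto
        refine ⟨hfc, by simpa using by omega, ?_⟩
        rw [hstep, h3]; push_cast; ring
  have mono1 : ∀ k, (pq k).1 ≤ (pq (k + 1)).1 ∧ (pq k).2 ≤ (pq (k + 1)).2 := by
    intro k; rw [hpqs k]; split_ifs <;> simp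
  have mono : ∀ k l, k ≤ l → (pq k).1 ≤ (pq l).1 ∧ (pq k).2 ≤ (pq l).2 := by
    intro k l hkl
    induction l, hkl using Nat.le_induction with
    | base => exact ⟨le_rfl, le_rfl⟩
    | succ l hkl ih => exact ⟨ih.1.trans (mono1 l).1, ih.2.trans (mono1 l).2⟩
  -- divisibility along the chain
  have hdvd : ∀ k, (s : ℤ) ∣ g k - (a + k * n) := by
    intro k
    obtain ⟨-, h2, h3⟩ := key k
    refine ⟨-(pq k).2, ?_⟩
    have hp : ((pq k).1 : ℤ) = (k : ℤ) - (pq k).2 := by omega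
    rw [h3, hp]; push_cast [hs]; ring
  -- the chain returns to a after s steps
  have hgsa : g s = a := by
    obtain ⟨w, hw, hwu⟩ := hC1 a
    have h1 : w = a := (hwu a ⟨haC, by simp⟩).symm
    have h2 : w = g s := by
      refine (hwu (g s) ⟨(key s).1, ?_⟩).symm
      have : g s - a = (g s - (a + s * n)) + s * (n : ℤ) := by ring
      rw [this]
      exact dvd_add (hdvd s) ⟨n, rfl⟩
    rw [← h2, h1]
  -- hence the total counts are (m, n)
  have hPQ : (pq s).1 = m ∧ (pq s).2 = n := by
    obtain ⟨-, h2, h3⟩ := key s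
    rw [hgsa] at h3
    have hmul : (pq s).1 * n = (pq s).2 * m := by
      have : ((pq s).1 : ℤ) * n = ((pq s).2 : ℤ) * m := by linarith [h3]
      exact_mod_cast this
    have hdq : n ∣ (pq s).2 := hcop.dvd_of_dvd_mul_right ⟨(pq s).1, by linarith [hmul]⟩
    have hdp : m ∣ (pq s).1 := hcop.symm.dvd_of_dvd_mul_right ⟨(pq s).2, by linarith [hmul]⟩
    obtain ⟨u, hu⟩ := hdp
    obtain ⟨v, hv⟩ := hdq
    have huv : u = v := by
      have : m * n * u = m * n * v := by
        rw [hu, hv] at hmul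
        calc m * n * u = m * u * n := by ring
          _ = n * v * m := hmul
          _ = m * n * v := by ring
      exact Nat.eq_of_mul_eq_mul_left (Nat.mul_pos hm hn) this
    subst huv
    have hsum : (m + n) * u = (m + n) * 1 := by
      have := h2
      rw [hu, hv] at this
      rw [add_mul, mul_one]
      omega
    have hu1 : u = 1 :=
      Nat.eq_of_mul_eq_mul_left (show 0 < m + n by omega) hsum
    rw [hu1, mul_one] at hu hv
    exact ⟨hu, hv⟩
  -- find the step index of j
  haveI : NeZero s := ⟨hs0.ne'⟩
  have hcop' : Nat.Coprime n s := by rw [hs, add_comm]; exact Nat.coprime_add_self_right.mpr hcop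
  set u : (ZMod s)ˣ := ZMod.unitOfCoprime n hcop' with hudef
  have hun : (u : ZMod s) = (n : ZMod s) := ZMod.coe_unitOfCoprime n hcop'
  set x : ZMod s := ((j - a : ℤ) : ZMod s) * (u⁻¹ : (ZMod s)ˣ) with hxdef
  set k : ℕ := x.val with hkdef
  have hk : k < s := ZMod.val_lt x
  have hkx : (k : ZMod s) = x := ZMod.natCast_rightInverse x
  have hdvdj : (s : ℤ) ∣ j - (a + k * n) := by
    rw [← ZMod.intCast_zmod_eq_zero_iff_dvd]
    push_cast
    rw [hkx]
    rw [hxdef, ← hun]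
    rw [Units.inv_mul_cancel_right]
    push_cast
    ring
  -- j is the k-th element of the chain
  have hjgk : j = g k := by
    obtain ⟨w, hw, hwu⟩ := hC1 j
    have h1 : w = j := (hwu j ⟨hj, by simp⟩).symm
    have h2 : w = g k := by
      refine (hwu (g k) ⟨(key k).1, ?_⟩).symm
      have : g k - j = (g k - (a + k * n)) - (j - (a + k * n)) := by ring
      rw [this]
      exact dvd_sub (hdvd k) hdvdj
    rw [← h2, h1]
  -- conclude
  obtain ⟨-, h2, h3⟩ := key k
  have hple : (pq k).1 ≤ m := hPQ.1 ▸ (mono k s hk.le).1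
  constructor
  · exact ha.2 hj
  · rw [hjgk, h3]
    have h4 : ((pq k).1 : ℤ) * n ≤ (m : ℤ) * n := by
      have : ((pq k).1 : ℤ) ≤ (m : ℤ) := by exact_mod_cast hple
      exact mul_le_mul_of_nonneg_right this (by positivity)
    have h5 : (0 : ℤ) ≤ ((pq k).2 : ℤ) * m := by positivity
    linarith
end

section
/- Let R be a commutative ring with a distinguished element ε, let M be an R-module, and let F : M → M be an additive map. Let n, m be non-negative integers and suppose there is a function v from the non-zero elements of M to the non-negative integers such that v(F x) = v(x) + n whenever x ≠ 0 and F x ≠ 0, and v(ε • x) = v(x) + (n + m) whenever x ≠ 0 and ε • x ≠ 0. Let n', m' be non-negative integers and suppose there exists a non-zero x ∈ M such that for every integer a ≥ 0 there is a non-zero x_a ∈ M with F^(a(n'+m'))(x) = ε^(a·n') • x_a, all these elements being non-zero. Then n'·(n + m) ≤ n·(n' + m'). -/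
theorem stmt10 (R : Type*) [CommRing R] (ε : R) (M : Type*) [AddCommGroup M]
    [Module R M] (F : M →+ M) (n m : ℕ)
    (v : M → ℕ)
    (hvF : ∀ x : M, x ≠ 0 → F x ≠ 0 → v (F x) = v x + n)
    (hvε : ∀ x : M, x ≠ 0 → ε • x ≠ 0 → v (ε • x) = v x + (n + m))
    (n' m' : ℕ) (x : M) (hx : x ≠ 0)
    (hchain : ∀ a : ℕ, ∃ xa : M, xa ≠ 0 ∧
      (⇑F)^[a * (n' + m')] x = ε ^ (a * n') • xa ∧ (⇑F)^[a * (n' + m')] x ≠ 0) :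
    n' * (n + m) ≤ n * (n' + m') := by
  -- valuation of iterates of F
  have hA : ∀ k : ℕ, (⇑F)^[k] x ≠ 0 → v ((⇑F)^[k] x) = v x + k * n := by
    intro k
    induction k with
    | zero => simp
    | succ k ih =>
      intro hk
      rw [Function.iterate_succ_apply'] at hk ⊢
      have hk0 : (⇑F)^[k] x ≠ 0 := by
        intro h; rw [h] at hk; simp at hk
      rw [hvF _ hk0 hk, ih hk0]; ring
  -- valuation of powers of ε acting
  have hB : ∀ (t : ℕ) (y : M), y ≠ 0 → ε ^ t • y ≠ 0 →
      v (ε ^ t • y) = v y + t * (n + m) := by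
    intro t
    induction t with
    | zero => intro y hy _; simp
    | succ t ih =>
      intro y hy ht
      have he : ε ^ (t + 1) • y = ε • ε ^ t • y := by
        rw [pow_succ, mul_comm, mul_smul]
      rw [he] at ht ⊢
      have ht0 : ε ^ t • y ≠ 0 := by
        intro h; rw [h] at ht; simp at ht
      rw [hvε _ ht0 ht, ih y hy ht0]; ring
  have key : ∀ a : ℕ, a * (n' * (n + m)) ≤ v x + a * (n * (n' + m')) := by
    intro a
    obtain ⟨xa, hxa, heq, hne⟩ := hchain a
    have h1 := hA (a * (n' + m')) hne
    rw [heq] at hne h1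
    have h2 := hB (a * n') xa hxa hne
    rw [h2] at h1
    calc a * (n' * (n + m)) = a * n' * (n + m) := by ring
      _ ≤ v xa + a * n' * (n + m) := Nat.le_add_left _ _
      _ = v x + a * (n' + m') * n := h1
      _ = v x + a * (n * (n' + m')) := by ring
  by_contra h
  push_neg at h
  have h' : n * (n' + m') + 1 ≤ n' * (n + m) := h
  have := key (v x + 1)
  nlinarith [this, h']
end

section
/- Let k be a perfect field of characteristic p > 0, let n and m be coprime non-negative integers with h = n + m ≥ 1, and let C be a beginning of a semi-module of type (n,m). Let Z_C be the k-vector space with basis (e_j)_{j∈C}. Define a Frobenius-semilinear map F : Z_C → Z_C and an inverse-Frobenius-semilinear map V : Z_C → Z_C on basis vectors by: for j ∈ C, if j + n ∈ C set F(e_j) = e_{j+n} and V(e_{j+n}) = 0; otherwise (so j − m ∈ C) set F(e_j) = 0 and V(e_{j−m}) = e_j. Then F and V are well-defined and satisfy Im F = ker V and Im V = ker F. -/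
open Classical in
/-- auxiliary shift map -/
noncomputable def shiftMap {k : Type*} [CommSemiring k] (C : Set ℤ) (t : ℤ) (φ : k → k)
    (x : C →₀ k) : C →₀ k :=
  x.sum fun c a => if hc : (c : ℤ) + t ∈ C then Finsupp.single (⟨(c : ℤ) + t, hc⟩ : C) (φ a) else 0

open Classical in
lemma shiftMap_apply {k : Type*} [CommSemiring k] (C : Set ℤ) (t : ℤ) (φ : k → k)
    (hφ : φ 0 = 0) (x : C →₀ k) (d : C) :
    shiftMap C t φ x d =
      if hd : (d : ℤ) - t ∈ C then φ (x ⟨(d : ℤ) - t, hd⟩) else 0 := by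
  classical
  rw [shiftMap, Finsupp.sum_apply]
  by_cases hd : (d : ℤ) - t ∈ C
  · rw [dif_pos hd]
    have hkey : ∀ (c : C) (a : k),
        (if hc : (c : ℤ) + t ∈ C then Finsupp.single (⟨(c : ℤ) + t, hc⟩ : C) (φ a) else 0) d
          = if (⟨(d : ℤ) - t, hd⟩ : C) = c then φ a else 0 := by
      intro c a
      by_cases hcd : (⟨(d : ℤ) - t, hd⟩ : C) = c
      · have hc : (c : ℤ) + t ∈ C := by
          have : (c : ℤ) = (d : ℤ) - t := by rw [← hcd]
          rw [this]; simpa using d.2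
        rw [dif_pos hc, if_pos hcd, Finsupp.single_apply, if_pos]
        apply Subtype.ext
        have : (c : ℤ) = (d : ℤ) - t := by rw [← hcd]
        simp [this]
      · rw [if_neg hcd]
        by_cases hc : (c : ℤ) + t ∈ C
        · rw [dif_pos hc, Finsupp.single_apply, if_neg]
          intro h'
          apply hcd
          apply Subtype.ext
          have := congrArg (Subtype.val) h'
          simp at this
          simp [← this]
        · rw [dif_neg hc]; rfl
    simp_rw [hkey]
    rw [Finsupp.sum_ite_eq]
    split_ifs with hs
    · rfl
    · rw [Finsupp.notMem_support_iff.mp hs, hφ]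
  · rw [dif_neg hd, Finsupp.sum]
    apply Finset.sum_eq_zero
    intro c _
    by_cases hc : (c : ℤ) + t ∈ C
    · rw [dif_pos hc, Finsupp.single_apply, if_neg]
      intro h'
      apply hd
      have := congrArg (Subtype.val) h'
      simp at this
      rw [← this]; simpa using c.2
    · rw [dif_neg hc]; rfl

theorem stmt14 (k : Type*) [Field k] (p : ℕ) [Fact p.Prime] [CharP k p]
    [PerfectRing k p] (n m : ℕ) (hcop : Nat.Coprime n m)
    (h : ℕ) (hh : h = n + m) (hh1 : 1 ≤ h)
    (C : Set ℤ) (hC : IsBeginning n m C) :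
    ∃ F V : (C →₀ k) → (C →₀ k),
      -- additivity and (inverse-)Frobenius-semilinearity
      (∀ x y, F (x + y) = F x + F y) ∧
      (∀ (a : k) (x), F (a • x) = a ^ p • F x) ∧
      (∀ x y, V (x + y) = V x + V y) ∧
      (∀ (a : k) (x), V (a • x) = (frobeniusEquiv k p).symm a • V x) ∧
      -- values on the basis vectors
      (∀ (j : ℤ) (hj : j ∈ C) (hjn : j + n ∈ C),
        F (Finsupp.single (⟨j, hj⟩ : C) (1 : k)) =
          Finsupp.single (⟨j + n, hjn⟩ : C) (1 : k) ∧
        V (Finsupp.single (⟨j + n, hjn⟩ : C) (1 : k)) = 0) ∧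
      (∀ (j : ℤ) (hj : j ∈ C) (hjn : j + n ∉ C) (hjm : j - m ∈ C),
        F (Finsupp.single (⟨j, hj⟩ : C) (1 : k)) = 0 ∧
        V (Finsupp.single (⟨j - m, hjm⟩ : C) (1 : k)) =
          Finsupp.single (⟨j, hj⟩ : C) (1 : k)) ∧
      -- the 1-truncated Dieudonné module conditions
      Set.range F = {x | V x = 0} ∧
      Set.range V = {x | F x = 0} := by
  classical
  have hp : p ≠ 0 := (Fact.out : p.Prime).ne_zero
  have hzF : ((· ^ p) : k → k) 0 = 0 := zero_pow hp
  have hzV : (((frobeniusEquiv k p).symm ·) : k → k) 0 = 0 := map_zero _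
  set σ := frobeniusEquiv k p with hσ
  have hσa : ∀ a : k, σ a = a ^ p := fun a => rfl
  -- basic combinatorics of C
  have hone : ∀ {a b : ℤ}, a ∈ C → b ∈ C → ((n : ℤ) + m) ∣ (a - b) → a = b := by
    intro a b ha hb hdvd
    obtain ⟨j, _, huniq⟩ := hC.1 b
    have h1 := huniq a ⟨ha, hdvd⟩
    have h2 := huniq b ⟨hb, by simp⟩
    rw [h1, h2]
  have hnm : (0 : ℤ) < (n : ℤ) + m := by
    have : 1 ≤ n + m := hh ▸ hh1
    exact_mod_cast this
  have hstep : ∀ {a : ℤ}, a ∈ C → a + ((n : ℤ) + m) ∉ C := by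
    intro a ha hin
    have := hone hin ha (by ring_nf; exact Dvd.intro 1 (by ring))
    omega
  have hstep' : ∀ {a : ℤ}, a ∈ C → a - ((n : ℤ) + m) ∉ C := by
    intro a ha hin
    have := hone hin ha ⟨-1, by ring⟩
    omega
  -- key equivalences
  have key1 : ∀ {d : ℤ}, d ∈ C → d - (n : ℤ) ∉ C → d + (m : ℤ) ∈ C := by
    intro d hd hdn
    obtain ⟨j, ⟨hj, hjd⟩, _⟩ := hC.1 (d - n)
    rcases hC.2 j hj with hjn | hjm
    · exfalso
      apply hdn
      have : j + (n : ℤ) = d := hone hjn hd (by obtain ⟨c, hc⟩ := hjd; exact ⟨c, by linarith⟩)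
      have : j = d - n := by omega
      rwa [← this]
    · have : j - (m : ℤ) = d := hone hjm hd
        (by obtain ⟨c, hc⟩ := hjd; exact ⟨c - 1, by push_cast; linarith⟩)
      have hjval : j = d + m := by omega
      rwa [← hjval]
  have key2 : ∀ {d : ℤ}, d ∈ C → d - (m : ℤ) ∉ C → d + (n : ℤ) ∈ C := by
    intro d hd hdm
    rcases hC.2 d hd with h1 | h1
    · exact h1
    · exact absurd h1 hdm
  -- the maps
  refine ⟨shiftMap C n (· ^ p), shiftMap C m (σ.symm ·), ?_, ?_, ?_, ?_, ?_, ?_, ?_, ?_⟩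
  · -- F additive
    intro x y
    ext d
    rw [Finsupp.add_apply, shiftMap_apply C _ (fun x : k => x ^ p) hzF,
      shiftMap_apply C _ (fun x : k => x ^ p) hzF, shiftMap_apply C _ (fun x : k => x ^ p) hzF]
    split_ifs with hd
    · rw [Finsupp.add_apply, add_pow_char]
    · rw [add_zero]
  · -- F semilinear
    intro a x
    ext d
    rw [Finsupp.smul_apply, shiftMap_apply C _ (fun x : k => x ^ p) hzF,
      shiftMap_apply C _ (fun x : k => x ^ p) hzF]
    split_ifs with hd
    · rw [Finsupp.smul_apply, smul_eq_mul, smul_eq_mul, mul_pow]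
    · rw [smul_zero]
  · -- V additive
    intro x y
    ext d
    rw [Finsupp.add_apply, shiftMap_apply C _ (fun x : k => σ.symm x) hzV,
      shiftMap_apply C _ (fun x : k => σ.symm x) hzV, shiftMap_apply C _ (fun x : k => σ.symm x) hzV]
    split_ifs with hd
    · rw [Finsupp.add_apply, map_add]
    · rw [add_zero]
  · -- V semilinear
    intro a x
    ext d
    rw [Finsupp.smul_apply, shiftMap_apply C _ (fun x : k => σ.symm x) hzV,
      shiftMap_apply C _ (fun x : k => σ.symm x) hzV]
    split_ifs with hd
    · rw [Finsupp.smul_apply, smul_eq_mul, smul_eq_mul, map_mul]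
    · rw [smul_zero]
  · -- basis values, case j + n ∈ C
    intro j hj hjn
    constructor
    · ext d
      rw [shiftMap_apply C _ (fun x : k => x ^ p) hzF]
      split_ifs with hd
      · rw [Finsupp.single_apply, Finsupp.single_apply]
        by_cases he : (⟨j, hj⟩ : C) = (⟨(d : ℤ) - n, hd⟩ : C)
        · rw [if_pos he, if_pos, one_pow]
          have := congrArg (Subtype.val) he
          simp at this
          apply Subtype.ext; simp; omega
        · rw [if_neg he, if_neg, zero_pow hp]
          intro h'
          apply he
          have := congrArg (Subtype.val) h'
          simp at this
          apply Subtype.ext; simp; omega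
      · rw [Finsupp.single_apply, if_neg]
        intro h'
        apply hd
        have := congrArg (Subtype.val) h'
        simp at this
        rw [← this]
        simpa using hj
    · ext d
      rw [shiftMap_apply C _ (fun x : k => σ.symm x) hzV]
      simp only [Finsupp.coe_zero, Pi.zero_apply]
      split_ifs with hd
      · rw [Finsupp.single_apply, if_neg, map_zero]
        intro h'
        have := congrArg (Subtype.val) h'
        simp at this
        -- j + n = d - m, so d = j + n + m ∈ C contradicts hj ∈ C via hstep
        apply hstep hj
        have : (d : ℤ) = j + ((n : ℤ) + m) := by omega
        rw [← this]; exact d.2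
      · rfl
  · -- basis values, case j + n ∉ C
    intro j hj hjn hjm
    constructor
    · ext d
      rw [shiftMap_apply C _ (fun x : k => x ^ p) hzF]
      simp only [Finsupp.coe_zero, Pi.zero_apply]
      split_ifs with hd
      · rw [Finsupp.single_apply, if_neg, zero_pow hp]
        intro h'
        apply hjn
        have := congrArg (Subtype.val) h'
        simp at this
        have hdj : (d : ℤ) = j + n := by omega
        rw [← hdj]; exact d.2
      · rfl
    · ext d
      rw [shiftMap_apply C _ (fun x : k => σ.symm x) hzV]
      split_ifs with hd
      · rw [Finsupp.single_apply, Finsupp.single_apply]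
        by_cases he : (⟨j - (m : ℤ), hjm⟩ : C) = (⟨(d : ℤ) - m, hd⟩ : C)
        · rw [if_pos he, if_pos, map_one]
          have := congrArg (Subtype.val) he
          simp at this
          apply Subtype.ext; simp; omega
        · rw [if_neg he, if_neg, map_zero]
          intro h'
          apply he
          have := congrArg (Subtype.val) h'
          simp at this
          apply Subtype.ext; simp; omega
      · rw [Finsupp.single_apply, if_neg]
        intro h'
        apply hd
        have := congrArg (Subtype.val) h'
        simp at this
        rw [← this]; simpa using hjm
  · -- range F = ker V
    ext x
    simp only [Set.mem_range, Set.mem_setOf_eq]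
    constructor
    · rintro ⟨y, rfl⟩
      ext d
      rw [shiftMap_apply C _ (fun x : k => σ.symm x) hzV]
      simp only [Finsupp.coe_zero, Pi.zero_apply]
      split_ifs with hd
      · have hnotin : ((⟨(d : ℤ) - m, hd⟩ : C) : ℤ) - (n : ℤ) ∉ C := by
          intro hc
          simp only at hc
          have he : (d : ℤ) - (m : ℤ) - (n : ℤ) = (d : ℤ) - ((n : ℤ) + m) := by ring
          rw [he] at hc
          exact hstep' d.2 hc
        rw [shiftMap_apply C _ (fun x : k => x ^ p) hzF, dif_neg hnotin, map_zero]
      · rfl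
    · intro hV
      -- x c = 0 whenever c + m ∈ C
      have hx0 : ∀ (c : C), ((c : ℤ) + m ∈ C) → x c = 0 := by
        intro c hcm
        have := DFunLike.congr_fun hV (⟨(c : ℤ) + m, hcm⟩ : C)
        rw [shiftMap_apply C _ (fun x : k => σ.symm x) hzV] at this
        simp only [Finsupp.coe_zero, Pi.zero_apply] at this
        rw [dif_pos (by simpa using c.2)] at this
        have hxc : x ⟨(c : ℤ) + m - m, by simpa using c.2⟩ = 0 := by
          exact (map_eq_zero_iff σ.symm (RingEquiv.injective _)).mp this
        have hceq : (⟨(c : ℤ) + m - m, by simpa using c.2⟩ : C) = c := by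
          apply Subtype.ext; simp
        rwa [hceq] at hxc
      refine ⟨shiftMap C (-(n : ℤ)) (σ.symm ·) x, ?_⟩
      ext d
      rw [shiftMap_apply C _ (fun x : k => x ^ p) hzF]
      split_ifs with hd
      · have hin : ((⟨(d : ℤ) - n, hd⟩ : C) : ℤ) - -(n : ℤ) ∈ C := by
          have he : ((⟨(d : ℤ) - n, hd⟩ : C) : ℤ) - -(n : ℤ) = (d : ℤ) := by
            simp
          rw [he]; exact d.2
        rw [shiftMap_apply C _ (fun x : k => σ.symm x) hzV, dif_pos hin]
        have he2 : (⟨((⟨(d : ℤ) - n, hd⟩ : C) : ℤ) - -(n : ℤ), hin⟩ : C) = d := by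
          apply Subtype.ext; simp
        rw [he2]
        exact σ.apply_symm_apply (x d)
      · rw [hx0 d (key1 d.2 hd)]
  · -- range V = ker F
    ext x
    simp only [Set.mem_range, Set.mem_setOf_eq]
    constructor
    · rintro ⟨y, rfl⟩
      ext d
      rw [shiftMap_apply C _ (fun x : k => x ^ p) hzF]
      simp only [Finsupp.coe_zero, Pi.zero_apply]
      split_ifs with hd
      · have hnotin : ((⟨(d : ℤ) - n, hd⟩ : C) : ℤ) - (m : ℤ) ∉ C := by
          intro hc
          simp only at hc
          have he : (d : ℤ) - (n : ℤ) - (m : ℤ) = (d : ℤ) - ((n : ℤ) + m) := by ring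
          rw [he] at hc
          exact hstep' d.2 hc
        rw [shiftMap_apply C _ (fun x : k => σ.symm x) hzV, dif_neg hnotin, zero_pow hp]
      · rfl
    · intro hF
      have hx0 : ∀ (c : C), ((c : ℤ) + n ∈ C) → x c = 0 := by
        intro c hcn
        have := DFunLike.congr_fun hF (⟨(c : ℤ) + n, hcn⟩ : C)
        rw [shiftMap_apply C _ (fun x : k => x ^ p) hzF] at this
        simp only [Finsupp.coe_zero, Pi.zero_apply] at this
        rw [dif_pos (by simpa using c.2)] at this
        have hxc : x ⟨(c : ℤ) + n - n, by simpa using c.2⟩ = 0 :=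
          pow_eq_zero_iff hp |>.mp this
        have hceq : (⟨(c : ℤ) + n - n, by simpa using c.2⟩ : C) = c := by
          apply Subtype.ext; simp
        rwa [hceq] at hxc
      refine ⟨shiftMap C (-(m : ℤ)) (· ^ p) x, ?_⟩
      ext d
      rw [shiftMap_apply C _ (fun x : k => σ.symm x) hzV]
      split_ifs with hd
      · have hin : ((⟨(d : ℤ) - m, hd⟩ : C) : ℤ) - -(m : ℤ) ∈ C := by
          have he : ((⟨(d : ℤ) - m, hd⟩ : C) : ℤ) - -(m : ℤ) = (d : ℤ) := by
            simp
          rw [he]; exact d.2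
        rw [shiftMap_apply C _ (fun x : k => x ^ p) hzF, dif_pos hin]
        have he2 : (⟨((⟨(d : ℤ) - m, hd⟩ : C) : ℤ) - -(m : ℤ), hin⟩ : C) = d := by
          apply Subtype.ext; simp
        rw [he2]
        exact σ.symm_apply_apply (x d)
      · rw [hx0 d (key2 d.2 hd)]
end

section
/- Let k be a perfect field of characteristic p > 0 and let n, m be coprime non-negative integers with h = n + m ≥ 1. Let Z = ⊕_{j∈ℤ} Z^j be a finite-dimensional ℤ-graded k-vector space equipped with a Frobenius-semilinear endomorphism F of degree n and an inverse-Frobenius-semilinear endomorphism V of degree m satisfying Im F = ker V and Im V = ker F. Then there is an integer c ≥ 0 such that dim_k Z = c·h and, for every j ∈ ℤ, the sum of dim_k Z^i over all i congruent to j modulo h equals c. -/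
open Module

section Semilinear

variable {k M N : Type} [Field k] [AddCommGroup M] [Module k M]
  [AddCommGroup N] [Module k N] {τ : k →+* k} [RingHomSurjective τ]

omit [RingHomSurjective τ] in
lemma linIndep_comp_semilinear (hτ : Function.Bijective τ) (f : M →ₛₗ[τ] N)
    {ι : Type} {v : ι → M} (hv : LinearIndependent k v)
    (hd : Disjoint (LinearMap.ker f) (Submodule.span k (Set.range v))) :
    LinearIndependent k (f ∘ v) := by
  rw [linearIndependent_iff'] at hv ⊢
  intro s g hg i hi
  set e := RingEquiv.ofBijective τ hτ with he
  have hmem : (∑ i ∈ s, (e.symm (g i)) • v i) ∈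
      LinearMap.ker f ⊓ Submodule.span k (Set.range v) := by
    refine Submodule.mem_inf.mpr ⟨?_, ?_⟩
    · rw [LinearMap.mem_ker, map_sum]
      rw [← hg]
      refine Finset.sum_congr rfl fun j _ => ?_
      rw [LinearMap.map_smulₛₗ]
      congr 1
      exact e.apply_symm_apply (g j)
    · exact Submodule.sum_mem _ fun j _ => Submodule.smul_mem _ _
        (Submodule.subset_span (Set.mem_range_self j))
  rw [hd.eq_bot, Submodule.mem_bot] at hmem
  have h0 : e.symm (g i) = 0 := by simpa using hv s (fun i => e.symm (g i)) hmem i hi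
  have h1 : g i = e (e.symm (g i)) := (e.apply_symm_apply _).symm
  rw [h1, h0, map_zero]

lemma finrank_map_semilinear_of_disjoint [FiniteDimensional k M]
    (hτ : Function.Bijective τ) (f : M →ₛₗ[τ] N) (W : Submodule k M)
    (hd : Disjoint (LinearMap.ker f) W) :
    finrank k (W.map f) = finrank k W := by
  set b := finBasis k W with hb
  set v : Fin (finrank k W) → M := fun i => (b i : M) with hvdef
  have hspan : Submodule.span k (Set.range v) = W := by
    have h1 : Set.range v = W.subtype '' Set.range b := by
      rw [← Set.range_comp]; rfl
    rw [h1, ← Submodule.map_span, b.span_eq, Submodule.map_top, Submodule.range_subtype]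
  have hli : LinearIndependent k v :=
    b.linearIndependent.map' W.subtype (Submodule.ker_subtype W)
  have hli2 : LinearIndependent k (f ∘ v) :=
    linIndep_comp_semilinear hτ f hli (by rwa [hspan])
  have hmap : W.map f = Submodule.span k (Set.range (f ∘ v)) := by
    rw [Set.range_comp, ← Submodule.map_span, hspan]
  rw [hmap, finrank_span_eq_card hli2, Fintype.card_fin]

lemma semilinear_rank_nullity [FiniteDimensional k M]
    (hτ : Function.Bijective τ) (f : M →ₛₗ[τ] N) (W : Submodule k M) :
    finrank k (W.map f) + finrank k (LinearMap.ker f ⊓ W : Submodule k M)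
      = finrank k W := by
  set g := f.domRestrict W with hg
  have hker : LinearMap.ker g = (LinearMap.ker f).comap W.subtype := by
    ext x; simp [hg, LinearMap.domRestrict]
  obtain ⟨U, hU⟩ := Submodule.exists_isCompl (LinearMap.ker g)
  have h1 : finrank k (LinearMap.ker g) + finrank k U = finrank k W :=
    Submodule.finrank_add_eq_of_isCompl hU
  have h2 : finrank k (LinearMap.ker f ⊓ W : Submodule k M) = finrank k (LinearMap.ker g) := by
    rw [hker, ← Submodule.finrank_map_subtype_eq W, Submodule.map_comap_subtype, inf_comm]
  have h3 : W.map f = U.map g := by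
    have htop : LinearMap.ker g ⊔ U = ⊤ := hU.codisjoint.eq_top
    have hbot : (LinearMap.ker g).map g = ⊥ := by
      ext x; simp only [Submodule.mem_map, LinearMap.mem_ker, Submodule.mem_bot]
      constructor
      · rintro ⟨y, hy, rfl⟩; exact hy
      · rintro rfl; exact ⟨0, by simp⟩
    calc W.map f = LinearMap.range g := by
          ext x
          simp only [Submodule.mem_map, LinearMap.mem_range, hg, LinearMap.domRestrict_apply]
          constructor
          · rintro ⟨y, hy, rfl⟩; exact ⟨⟨y, hy⟩, rfl⟩
          · rintro ⟨⟨y, hy⟩, rfl⟩; exact ⟨y, hy, rfl⟩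
      _ = Submodule.map g ⊤ := (Submodule.map_top g).symm
      _ = Submodule.map g (LinearMap.ker g ⊔ U) := by rw [htop]
      _ = (LinearMap.ker g).map g ⊔ U.map g := Submodule.map_sup _ _ _
      _ = U.map g := by rw [hbot, bot_sup_eq]
  have h4 : finrank k (U.map g) = finrank k U :=
    finrank_map_semilinear_of_disjoint hτ g U hU.disjoint
  rw [h3, h4, h2]; omega

end Semilinear

lemma component_extract {k M : Type} [Field k] [AddCommGroup M] [Module k M]
    (grading : ℤ → Submodule k M) (hint : DirectSum.IsInternal grading)
    (T : M →+ M) (t : ℤ) (hdeg : ∀ j : ℤ, ∀ x ∈ grading j, T x ∈ grading (j + t))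
    {i : ℤ} {x : M} (hx : x ∈ grading i) (hr : ∃ y, T y = x) :
    ∃ y ∈ grading (i - t), T y = x := by
  classical
  letI : DirectSum.Decomposition grading := hint.chooseDecomposition
  obtain ⟨y, rfl⟩ := hr
  set w := DirectSum.decompose grading y with hw
  refine ⟨(w (i - t) : M), (w (i - t)).2, ?_⟩
  have hy : y = ∑ j ∈ DFinsupp.support w, ((w j : M)) :=
    (DirectSum.sum_support_decompose grading y).symm
  have hTy : T y = ∑ j ∈ DFinsupp.support w, T ((w j : M)) := by
    conv_lhs => rw [hy, map_sum]
  have h1 : (DirectSum.decompose grading (T y) i : M) = T y :=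
    DirectSum.decompose_of_mem_same _ hx
  have h2 : (DirectSum.decompose grading (T y) i : M)
      = ∑ j ∈ DFinsupp.support w, (DirectSum.decompose grading (T ((w j : M))) i : M) := by
    rw [hTy, DirectSum.decompose_sum, DFinsupp.finset_sum_apply]
    exact AddSubmonoidClass.coe_finset_sum _ _
  have h3 : ∑ j ∈ DFinsupp.support w, (DirectSum.decompose grading (T ((w j : M))) i : M)
      = (DirectSum.decompose grading (T ((w (i - t) : M))) i : M) := by
    refine Finset.sum_eq_single (i - t) ?_ ?_
    · intro j _ hj
      have hmem := hdeg j _ (w j).2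
      exact DirectSum.decompose_of_mem_ne _ hmem (by omega)
    · intro hnot
      have hz : w (i - t) = 0 := DFinsupp.notMem_support_iff.mp hnot
      rw [hz]
      simp
  have h4 : (DirectSum.decompose grading (T ((w (i - t) : M))) i : M) = T ((w (i - t) : M)) := by
    have hmem := hdeg (i - t) _ (w (i - t)).2
    rw [show (i - t) + t = i by omega] at hmem
    exact DirectSum.decompose_of_mem_same _ hmem
  rw [← h1, h2, h3, h4]

lemma finsum_class_shift {h : ℕ} (g : ℤ → ℕ) (a : ℤ) (j : ZMod h) :
    (∑ᶠ i ∈ {i : ℤ | (i : ZMod h) = j}, g (i - a))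
      = ∑ᶠ i ∈ {i : ℤ | (i : ZMod h) = j - (a : ZMod h)}, g i := by
  refine finsum_mem_eq_of_bijOn (fun i => i - a) ⟨?_, ?_, ?_⟩ (fun x _ => rfl)
  · intro i hi
    simp only [Set.mem_setOf_eq] at hi ⊢
    push_cast
    rw [hi]
  · exact Set.injOn_of_injective sub_left_injective
  · intro x hx
    simp only [Set.mem_setOf_eq] at hx
    refine ⟨x + a, ?_, by ring⟩
    simp only [Set.mem_setOf_eq]
    push_cast
    rw [hx]; ring

/-- A graded 1-truncated Dieudonné module of type `(n,m)` over a perfect field `k`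
of characteristic `p`: a finite-dimensional ℤ-graded `k`-vector space with a
Frobenius-semilinear endomorphism `F` of degree `n` and an inverse-Frobenius-semilinear
endomorphism `Vo` of degree `m` satisfying `Im F = ker Vo` and `Im Vo = ker F`. -/
structure GradedTDM (k : Type) [Field k] (p : ℕ) [ExpChar k p] [PerfectRing k p]
    (n m : ℕ) where
  Vsp : Type
  [instAdd : AddCommGroup Vsp]
  [instMod : Module k Vsp]
  [instFin : FiniteDimensional k Vsp]
  grading : ℤ → Submodule k Vsp
  internal : DirectSum.IsInternal grading
  F : Vsp → Vsp
  Vo : Vsp → Vsp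
  F_add : ∀ x y, F (x + y) = F x + F y
  F_smul : ∀ (a : k) (x), F (a • x) = a ^ p • F x
  Vo_add : ∀ x y, Vo (x + y) = Vo x + Vo y
  Vo_smul : ∀ (a : k) (x), Vo (a • x) = (frobeniusEquiv k p).symm a • Vo x
  F_deg : ∀ j : ℤ, ∀ x ∈ grading j, F x ∈ grading (j + n)
  Vo_deg : ∀ j : ℤ, ∀ x ∈ grading j, Vo x ∈ grading (j + m)
  range_F : Set.range F = {x | Vo x = 0}
  range_Vo : Set.range Vo = {x | F x = 0}

attribute [instance] GradedTDM.instAdd GradedTDM.instMod GradedTDM.instFin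

theorem stmt15 (k : Type) [Field k] (p : ℕ) [Fact p.Prime] [CharP k p]
    [ExpChar k p] [PerfectRing k p] (n m : ℕ) (hcop : Nat.Coprime n m)
    (h : ℕ) (hh : h = n + m) (hh1 : 1 ≤ h)
    (Z : GradedTDM k p n m) :
    ∃ c : ℕ, finrank k Z.Vsp = c * h ∧
      ∀ j : ZMod h, (∑ᶠ i ∈ {i : ℤ | (i : ZMod h) = j}, finrank k (Z.grading i)) = c := by
  classical
  haveI : NeZero h := ⟨by omega⟩
  have hFbij : Function.Bijective (frobenius k p) := bijective_frobenius k p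
  haveI : RingHomSurjective (frobenius k p) := ⟨hFbij.surjective⟩
  set τV : k →+* k := (frobeniusEquiv k p).symm.toRingHom with hτV
  have hVbij : Function.Bijective τV := (frobeniusEquiv k p).symm.bijective
  haveI : RingHomSurjective τV := ⟨hVbij.surjective⟩
  set Fl : Z.Vsp →ₛₗ[frobenius k p] Z.Vsp :=
    { toFun := Z.F, map_add' := Z.F_add,
      map_smul' := fun a x => by
        show Z.F (a • x) = (frobenius k p) a • Z.F x
        rw [Z.F_smul, frobenius_def] } with hFl
  set Vl : Z.Vsp →ₛₗ[τV] Z.Vsp :=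
    { toFun := Z.Vo, map_add' := Z.Vo_add,
      map_smul' := fun a x => by
        show Z.Vo (a • x) = τV a • Z.Vo x
        exact Z.Vo_smul a x } with hVl
  set d : ℤ → ℕ := fun i => finrank k (Z.grading i) with hd
  set f : ℤ → ℕ := fun i => finrank k ((Z.grading i).map Fl) with hf
  set v : ℤ → ℕ := fun i => finrank k ((Z.grading i).map Vl) with hv
  -- kernel identifications
  have hkerF : ∀ i : ℤ, LinearMap.ker Fl ⊓ Z.grading i = (Z.grading (i - m)).map Vl := by
    intro i
    apply le_antisymm
    · rintro x hx
      obtain ⟨hker, hgrad⟩ := Submodule.mem_inf.mp hx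
      have hF0 : Z.F x = 0 := hker
      have hrange : ∃ y, Z.Vo y = x := by
        have : x ∈ Set.range Z.Vo := by rw [Z.range_Vo]; exact hF0
        exact this
      obtain ⟨y, hy, hVy⟩ := component_extract Z.grading Z.internal
        (AddMonoidHom.mk' Z.Vo Z.Vo_add) m Z.Vo_deg hgrad hrange
      exact ⟨y, hy, hVy⟩
    · rintro x ⟨y, hy, rfl⟩
      refine Submodule.mem_inf.mpr ⟨?_, ?_⟩
      · have : Z.Vo y ∈ Set.range Z.Vo := ⟨y, rfl⟩
        rw [Z.range_Vo] at this
        exact this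
      · have := Z.Vo_deg (i - m) y hy
        rwa [show (i - (m : ℤ)) + m = i by omega] at this
  have hkerV : ∀ i : ℤ, LinearMap.ker Vl ⊓ Z.grading i = (Z.grading (i - n)).map Fl := by
    intro i
    apply le_antisymm
    · rintro x hx
      obtain ⟨hker, hgrad⟩ := Submodule.mem_inf.mp hx
      have hV0 : Z.Vo x = 0 := hker
      have hrange : ∃ y, Z.F y = x := by
        have : x ∈ Set.range Z.F := by rw [Z.range_F]; exact hV0
        exact this
      obtain ⟨y, hy, hFy⟩ := component_extract Z.grading Z.internal
        (AddMonoidHom.mk' Z.F Z.F_add) n Z.F_deg hgrad hrange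
      exact ⟨y, hy, hFy⟩
    · rintro x ⟨y, hy, rfl⟩
      refine Submodule.mem_inf.mpr ⟨?_, ?_⟩
      · have : Z.F y ∈ Set.range Z.F := ⟨y, rfl⟩
        rw [Z.range_F] at this
        exact this
      · have := Z.F_deg (i - n) y hy
        rwa [show (i - (n : ℤ)) + n = i by omega] at this
  -- rank-nullity
  have hdf : ∀ i : ℤ, f i + v (i - m) = d i := by
    intro i
    have := semilinear_rank_nullity hFbij Fl (Z.grading i)
    rwa [hkerF i] at this
  have hdv : ∀ i : ℤ, v i + f (i - n) = d i := by
    intro i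
    have := semilinear_rank_nullity hVbij Vl (Z.grading i)
    rwa [hkerV i] at this
  have star : ∀ i : ℤ, d i + f (i - h) = f i + d (i - m) := by
    intro i
    have h1 := hdf i
    have h2 := hdv (i - m)
    rw [show (i - (m : ℤ)) - n = i - h by omega] at h2
    omega
  -- finite supports
  haveI fin1 : Fintype {i : ℤ // Z.grading i ≠ ⊥} :=
    (Z.internal.submodule_iSupIndep).fintypeNeBotOfFiniteDimensional
  have hSfin : ({i : ℤ | Z.grading i ≠ ⊥}).Finite :=
    Set.finite_coe_iff.mp (by exact @Finite.of_fintype _ fin1)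
  have hsupd : Function.support d ⊆ {i : ℤ | Z.grading i ≠ ⊥} := by
    intro i hi
    simp only [Function.mem_support, hd] at hi
    intro hbot
    apply hi
    rw [hbot, finrank_bot]
  have hSd : (Function.support d).Finite := hSfin.subset hsupd
  have hsupf : Function.support f ⊆ {i : ℤ | Z.grading i ≠ ⊥} := by
    intro i hi
    simp only [Function.mem_support, hf] at hi
    intro hbot
    apply hi
    rw [hbot, Submodule.map_bot, finrank_bot]
  have hSf : (Function.support f).Finite := hSfin.subset hsupf
  -- classes
  set C : ZMod h → Set ℤ := fun j => {i : ℤ | (i : ZMod h) = j} with hC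
  set D : ZMod h → ℕ := fun j => ∑ᶠ i ∈ C j, d i with hD
  have hshiftfin : ∀ (g : ℤ → ℕ) (a : ℤ), (Function.support g).Finite →
      (Function.support (fun i => g (i - a))).Finite := by
    intro g a hg
    have : Function.support (fun i => g (i - a)) ⊆ (fun i => i + a) '' (Function.support g) := by
      intro i hi
      exact ⟨i - a, hi, by ring⟩
    exact (hg.image _).subset this
  have hshift : ∀ j : ZMod h, D j = D (j - (m : ZMod h)) := by
    intro j
    have e1 : (∑ᶠ i ∈ C j, (d i + f (i - h))) = ∑ᶠ i ∈ C j, (f i + d (i - m)) :=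
      finsum_mem_congr rfl fun i _ => star i
    rw [finsum_mem_add_distrib' (hSd.subset Set.inter_subset_right)
        ((hshiftfin f h hSf).subset Set.inter_subset_right),
      finsum_mem_add_distrib' (hSf.subset Set.inter_subset_right)
        ((hshiftfin d m hSd).subset Set.inter_subset_right)] at e1
    have e2 : (∑ᶠ i ∈ C j, f (i - (h : ℤ))) = ∑ᶠ i ∈ C j, f i := by
      simp only [hC]
      have h0 : (((h : ℤ)) : ZMod h) = 0 := by
        push_cast
        exact ZMod.natCast_self h
      have := finsum_class_shift (h := h) f (h : ℤ) j
      rw [h0, sub_zero] at this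
      exact this
    have e3 : (∑ᶠ i ∈ C j, d (i - (m : ℤ))) = D (j - (m : ZMod h)) := by
      simp only [hC, hD]
      have hm0 : (((m : ℤ)) : ZMod h) = ((m : ℕ) : ZMod h) := by push_cast; rfl
      have := finsum_class_shift (h := h) d (m : ℤ) j
      rw [hm0] at this
      exact this
    rw [e2, e3] at e1
    have hgoal : D j = ∑ᶠ i ∈ C j, d i := by simp only [hD]
    rw [hgoal]
    omega
  -- constancy
  have hmh : Nat.Coprime m h := by
    rw [hh]
    exact Nat.coprime_add_self_right.mpr hcop.symm
  set u : (ZMod h)ˣ := ZMod.unitOfCoprime m hmh with hu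
  have hiter : ∀ (t : ℕ) (j : ZMod h), D j = D (j - (t : ZMod h) * (m : ZMod h)) := by
    intro t
    induction t with
    | zero => intro j; simp
    | succ t ih =>
      intro j
      rw [ih j, hshift (j - (t : ZMod h) * (m : ZMod h))]
      congr 1
      push_cast
      ring
  have hconst : ∀ j j' : ZMod h, D j = D j' := by
    intro j j'
    set t : ℕ := ((j - j') * ((u⁻¹ : (ZMod h)ˣ) : ZMod h)).val with ht
    have htc : (t : ZMod h) * (m : ZMod h) = j - j' := by
      rw [ht, ZMod.natCast_val, ZMod.cast_id]
      have hum : ((u : (ZMod h)ˣ) : ZMod h) = (m : ZMod h) := ZMod.coe_unitOfCoprime m hmh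
      calc (j - j') * ((u⁻¹ : (ZMod h)ˣ) : ZMod h) * (m : ZMod h)
          = (j - j') * (((u⁻¹ : (ZMod h)ˣ) : ZMod h) * ((u : (ZMod h)ˣ) : ZMod h)) := by
            rw [hum]; ring
        _ = j - j' := by
            rw [← Units.val_mul]
            simp
    rw [hiter t j, htc, sub_sub_cancel]
  -- total dimension
  have hinternal' : DirectSum.IsInternal (fun i : {i : ℤ // Z.grading i ≠ ⊥} => Z.grading i) :=
    DirectSum.isInternal_ne_bot_iff.mpr Z.internal
  have htot : finrank k Z.Vsp = ∑ i' : {i : ℤ // Z.grading i ≠ ⊥}, d i' := by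
    rw [← finrank_directSum]
    exact (LinearEquiv.ofBijective (DirectSum.coeLinearMap _) hinternal').finrank_eq.symm
  set S : Finset ℤ := hSfin.toFinset with hS
  have hsub : ∑ i' : {i : ℤ // Z.grading i ≠ ⊥}, d i' = ∑ i ∈ S, d i := by
    rw [← Finset.sum_subtype S (fun x => by simp [hS]) d]
  have hfinsum : (∑ᶠ i, d i) = ∑ i ∈ S, d i := by
    apply finsum_eq_sum_of_support_subset
    rw [hS, hSfin.coe_toFinset]
    exact hsupd
  have hDj : ∀ j : ZMod h, D j = ∑ i ∈ S.filter (fun i : ℤ => ((i : ZMod h) = j)), d i := by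
    intro j
    apply finsum_mem_eq_sum_of_inter_support_eq
    ext i
    simp only [Set.mem_inter_iff, Set.mem_setOf_eq, Finset.coe_filter, Function.mem_support, hC]
    constructor
    · rintro ⟨h1, h2⟩
      exact ⟨⟨by simpa [hS] using hsupd h2, h1⟩, h2⟩
    · rintro ⟨⟨_, h1⟩, h2⟩
      exact ⟨h1, h2⟩
  have hpart : (∑ᶠ i, d i) = ∑ j : ZMod h, D j := by
    rw [hfinsum]
    rw [Finset.sum_congr rfl (fun j _ => hDj j)]
    exact (Finset.sum_fiberwise S (fun i : ℤ => (i : ZMod h)) d).symm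
  have hsumD : ∑ j : ZMod h, D j = h * D 0 := by
    rw [Finset.sum_congr rfl (fun j _ => hconst j 0)]
    rw [Finset.sum_const, Finset.card_univ, ZMod.card h, smul_eq_mul]
  have hfinsum_univ : finrank k Z.Vsp = ∑ᶠ i, d i := by
    rw [htot, hsub, hfinsum]
  refine ⟨D 0, ?_, fun j => hconst j 0⟩
  rw [hfinsum_univ, hpart, hsumD, Nat.mul_comm]
end

section
/- Let k be a perfect field of characteristic p > 0 and n, m coprime non-negative integers with h = n + m ≥ 1. Let Z = ⊕_{j∈ℤ} Z^j be a graded 1-truncated Dieudonné module of type (n,m) over k with dim_k Z = h. Then the set C_Z := {j ∈ ℤ : Z^j ≠ 0} is a beginning of a semi-module of type (n,m), and each nonzero graded piece Z^j is one-dimensional. -/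
open Module

/-!
A nonzero `x ∈ Z^j` either has `F x ≠ 0` in `Z^(j+n)`, or lies in `ker F = Im V`; in the latter
case it is the `V`-image of the component of its preimage in `Z^(j-m)`, so that piece is nonzero.
As `-m ≡ n (mod h)`, the residues of the support are thus stable under adding `n`, a generator of
`ℤ/h`, so every residue class meets the support. Since the dimensions of the pieces add up to `h`,
each class is met exactly once and every nonzero piece is a line.
-/

open Finset

theorem Finset.eq_one_of_sum_le_card {ι : Type*} {s : Finset ι} {f : ι → ℕ}
    (hf : ∀ i ∈ s, 1 ≤ f i) (hsum : ∑ i ∈ s, f i ≤ #s) : ∀ i ∈ s, f i = 1 := by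
  have hs : ∑ _i ∈ s, 1 = ∑ i ∈ s, f i :=
    le_antisymm (sum_le_sum hf) (by simpa using hsum)
  exact fun i hi => ((sum_eq_sum_iff_of_le hf).mp hs i hi).symm

theorem Finset.existsUnique_mem_dvd_sub_of_image_eq_univ {h : ℕ} [NeZero h] {C : Finset ℤ}
    (himage : C.image ((↑) : ℤ → ZMod h) = univ) (hcard : #C ≤ h) (i : ℤ) :
    ∃! j, j ∈ C ∧ (h : ℤ) ∣ j - i := by
  have hinj : Set.InjOn ((↑) : ℤ → ZMod h) C := by
    refine injOn_of_card_image_eq (le_antisymm card_image_le ?_)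
    rwa [himage, card_univ, ZMod.card]
  obtain ⟨j, hj, hji⟩ := mem_image.mp (himage ▸ mem_univ (i : ZMod h))
  refine ⟨j, ⟨hj, (ZMod.intCast_eq_intCast_iff_dvd_sub _ _ _).mp hji.symm⟩, ?_⟩
  rintro j' ⟨hj', hdvd⟩
  exact hinj hj' hj (((ZMod.intCast_eq_intCast_iff_dvd_sub _ _ _).mpr hdvd).symm.trans hji.symm)

theorem ZMod.eq_univ_of_add_mem {h a : ℕ} [NeZero h] (ha : a.Coprime h) {S : Set (ZMod h)}
    (hS : S.Nonempty) (hadd : ∀ x ∈ S, x + a ∈ S) : S = Set.univ := by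
  obtain ⟨x₀, hx₀⟩ := hS
  have hiter : ∀ t : ℕ, x₀ + t * a ∈ S := by
    intro t
    induction t with
    | zero => simpa using hx₀
    | succ t ih => simpa [add_mul, add_assoc] using hadd _ ih
  refine Set.eq_univ_of_forall fun r => ?_
  let u := ZMod.unitOfCoprime a ha
  have := hiter ((r - x₀) * ↑u⁻¹).val
  rwa [ZMod.natCast_zmod_val, ← ZMod.coe_unitOfCoprime a ha, mul_assoc, Units.inv_mul, mul_one,
    add_sub_cancel] at this

namespace DirectSum.IsInternal

variable {ι K M : Type*} [DecidableEq ι]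

theorem eq_zero_of_mem_range_of_eq_bot [AddGroup ι] [Ring K] [AddCommGroup M] [Module K M]
    {A : ι → Submodule K M} (hA : IsInternal A) (T : M →+ M) {d : ι}
    (hT : ∀ i, ∀ x ∈ A i, T x ∈ A (i + d)) {j : ι} (hj : A (j - d) = ⊥) {x : M}
    (hxj : x ∈ A j) (hxT : x ∈ Set.range T) : x = 0 := by
  have hrange : ∀ y, T y ∈ ⨆ i ≠ j, A i := by
    intro y
    have hy : y ∈ ⨆ i, A i := hA.submodule_iSup_eq_top ▸ Submodule.mem_top
    induction hy using Submodule.iSup_induction' with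
    | mem i z hz =>
      by_cases hij : i + d = j
      · rw [eq_sub_of_add_eq hij, hj, Submodule.mem_bot] at hz
        simp [hz]
      · exact (le_iSup₂_of_le (f := fun l (_ : l ≠ j) => A l) (i + d) hij le_rfl) (hT i z hz)
    | zero => simp
    | add a b _ _ ha hb => rw [map_add]; exact add_mem ha hb
  obtain ⟨y, rfl⟩ := hxT
  exact Submodule.disjoint_def.mp (hA.submodule_iSupIndep j) _ hxj (hrange y)

theorem sum_finrank_eq_finrank [DivisionRing K] [AddCommGroup M] [Module K M]
    [FiniteDimensional K M] {A : ι → Submodule K M} (hA : IsInternal A) (s : Finset ι)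
    (hs : ∀ i, A i ≠ ⊥ → i ∈ s) : ∑ i ∈ s, finrank K (A i) = finrank K M := by
  have hAs : IsInternal fun i : s => A i := by
    rw [isInternal_submodule_iff_iSupIndep_and_iSup_eq_top] at hA ⊢
    refine ⟨hA.1.comp Subtype.val_injective, le_antisymm le_top (hA.2.symm.le.trans ?_)⟩
    refine iSup_le fun i => ?_
    by_cases hi : A i = ⊥
    · simp [hi]
    · exact le_iSup (fun l : s => A l) ⟨i, hs i hi⟩
  rw [← sum_coe_sort, ← finrank_directSum,
    (LinearEquiv.ofBijective (coeLinearMap fun i : s => A i) hAs).finrank_eq]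

end DirectSum.IsInternal

namespace GradedTDM

variable {k : Type} [Field k] {p : ℕ} [ExpChar k p] [PerfectRing k p] {n m : ℕ}
  (Z : GradedTDM k p n m)

theorem grading_add_ne_bot_or_grading_sub_ne_bot {j : ℤ} (hj : Z.grading j ≠ ⊥) :
    Z.grading (j + n) ≠ ⊥ ∨ Z.grading (j - m) ≠ ⊥ := by
  obtain ⟨x, hx, hx0⟩ := (Submodule.ne_bot_iff _).mp hj
  by_cases hFx : Z.F x = 0
  · refine Or.inr fun hbot => hx0 ?_
    have hxV : x ∈ Set.range Z.Vo := Z.range_Vo ▸ hFx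
    exact Z.internal.eq_zero_of_mem_range_of_eq_bot (AddMonoidHom.mk' Z.Vo Z.Vo_add) Z.Vo_deg hbot hx hxV
  · exact Or.inl ((Submodule.ne_bot_iff _).mpr ⟨_, Z.F_deg j x hx, hFx⟩)

theorem image_intCast_support_eq_univ (hcop : n.Coprime m) [NeZero (n + m)]
    (hne : {j | Z.grading j ≠ ⊥}.Nonempty) :
    ((↑) : ℤ → ZMod (n + m)) '' {j | Z.grading j ≠ ⊥} = Set.univ := by
  refine ZMod.eq_univ_of_add_mem (Nat.coprime_self_add_right.mpr hcop) (hne.image _) ?_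
  rintro _ ⟨j, hj, rfl⟩
  have hnm : ((n + m : ℕ) : ZMod (n + m)) = 0 := ZMod.natCast_self _
  push_cast at hnm
  rcases Z.grading_add_ne_bot_or_grading_sub_ne_bot hj with hj' | hj'
  · exact ⟨j + n, hj', by push_cast; ring⟩
  · exact ⟨j - m, hj', by push_cast; linear_combination -hnm⟩

end GradedTDM

theorem stmt16_general (k : Type) [Field k] (p : ℕ)
    [ExpChar k p] [PerfectRing k p] (n m : ℕ) (hcop : Nat.Coprime n m)
    (h : ℕ) (hh : h = n + m) (hh1 : 1 ≤ h)
    (Z : GradedTDM k p n m) (hdim : Module.finrank k Z.Vsp = h) :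
    IsBeginning n m {j : ℤ | Z.grading j ≠ ⊥} ∧
      ∀ j : ℤ, Z.grading j ≠ ⊥ → Module.finrank k (Z.grading j) = 1 := by
  subst hh
  have : NeZero (n + m) := ⟨by omega⟩
  have hfin := Submodule.finite_ne_bot_of_iSupIndep Z.internal.submodule_iSupIndep
  set C := hfin.toFinset
  have hmem (j : ℤ) : j ∈ C ↔ Z.grading j ≠ ⊥ := hfin.mem_toFinset
  have hsum : ∑ j ∈ C, finrank k (Z.grading j) = n + m :=
    hdim ▸ Z.internal.sum_finrank_eq_finrank C fun j => (hmem j).mpr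
  have hpos : ∀ j ∈ C, 1 ≤ finrank k (Z.grading j) := fun j hj =>
    Nat.one_le_iff_ne_zero.mpr (mt Submodule.finrank_eq_zero.mp ((hmem j).mp hj))
  have himage : C.image ((↑) : ℤ → ZMod (n + m)) = univ := by
    obtain ⟨j, hj⟩ := nonempty_of_sum_ne_zero (by rw [hsum]; omega)
    rw [← coe_inj, coe_image, hfin.coe_toFinset, coe_univ]
    exact Z.image_intCast_support_eq_univ hcop ⟨j, (hmem j).mp hj⟩
  have hcard_ge : n + m ≤ #C := by
    simpa [himage, ZMod.card] using card_image_le (s := C) (f := ((↑) : ℤ → ZMod (n + m)))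
  have hcard_le : #C ≤ n + m := by simpa [hsum] using card_nsmul_le_sum C _ 1 hpos
  refine ⟨⟨fun i => ?_, fun i => Z.grading_add_ne_bot_or_grading_sub_ne_bot⟩,
    fun j hj => eq_one_of_sum_le_card hpos (hsum ▸ hcard_ge) j ((hmem j).mpr hj)⟩
  simpa only [Nat.cast_add, hmem, Set.mem_ofPred_eq] using
    existsUnique_mem_dvd_sub_of_image_eq_univ himage hcard_le i

theorem stmt16 (k : Type) [Field k] (p : ℕ) [Fact p.Prime] [CharP k p]
    [ExpChar k p] [PerfectRing k p] (n m : ℕ) (hcop : Nat.Coprime n m)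
    (h : ℕ) (hh : h = n + m) (hh1 : 1 ≤ h)
    (Z : GradedTDM k p n m) (hdim : Module.finrank k Z.Vsp = h) :
    IsBeginning n m {j : ℤ | Z.grading j ≠ ⊥} ∧
      ∀ j : ℤ, Z.grading j ≠ ⊥ → Module.finrank k (Z.grading j) = 1 :=
  stmt16_general k p n m hcop h hh hh1 Z hdim
end

section
/- Let k be an algebraically closed field of characteristic p > 0 and n, m coprime non-negative integers with n ≠ m and h = n + m ≥ 1. Any two graded 1-truncated Dieudonné modules of type (n,m) over k of dimension h with the same support set {j : Z^j ≠ 0} are isomorphic as graded 1-truncated Dieudonné modules (i.e. by a degree-zero isomorphism commuting with F and V). -/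
open Module

/-!
Let `S` be the common support and `h = n + m`. If `F` kills `Zʲ ≠ 0`, then `Zʲ ⊆ ker F = Im V`
is hit by `V` from `Zʲ⁻ᵐ`, so `S` is stable under the step `j ↦ j + n` if `j + n ∈ S`,
`j ↦ j - m` otherwise. Since `-m ≡ n` mod `h`, the `i`-th point of the orbit of `j₀` is
`j₀ + i n` mod `h`, and these residues are distinct for `i < h` because `n` is a unit mod `h`.
As `|S| ≤ dim Z = h`, the orbit is all of `S`, the points of `S` are pairwise incongruent mod `h`
(so `j + n ∈ S` and `j - m ∈ S` never hold together) and every `Zʲ` with `j ∈ S` is a line.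
Walking along the orbit, applying `F` on forward steps and inverting `V` on backward ones, gives
vectors `e₀, …, e_h` with `e_h = a e₀`; replacing `eᵢ` by `μ^(pⁱ) eᵢ` with `μ^(p^h - 1) = a⁻¹`
(`k` is algebraically closed) gives `e_h = e₀`. Two modules with the same support are then
isomorphic by matching these vectors.
-/

theorem Nat.Coprime.add_pos {n m : ℕ} (hcop : n.Coprime m) : 0 < n + m := by
  by_contra h
  obtain ⟨rfl, rfl⟩ : n = 0 ∧ m = 0 := by omega
  exact absurd hcop (by decide)

theorem ZMod.natCast_add_natCast_self (n m : ℕ) : (n + m : ZMod (n + m)) = 0 := by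
  exact_mod_cast ZMod.natCast_self (n + m)

theorem ZMod.eq_of_natCast_mul_eq {n m : ℕ} (hcop : n.Coprime m) {i i' : ℕ} (hi : i < n + m)
    (hi' : i' < n + m) (h : (i * n : ZMod (n + m)) = i' * n) : i = i' := by
  have hn : IsUnit (n : ZMod (n + m)) :=
    (ZMod.unitOfCoprime n (Nat.coprime_self_add_right.mpr hcop)).isUnit
  have := hn.mul_left_injective h
  rwa [ZMod.natCast_eq_natCast_iff', Nat.mod_eq_of_lt hi, Nat.mod_eq_of_lt hi'] at this

theorem Submodule.eq_span_singleton_of_finrank_eq_one {K V : Type*} [DivisionRing K]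
    [AddCommGroup V] [Module K V] [FiniteDimensional K V] {P : Submodule K V}
    (h : finrank K P = 1) {x : V} (hx : x ∈ P) (hx0 : x ≠ 0) : P = K ∙ x :=
  (eq_of_le_of_finrank_le ((span_singleton_le_iff_mem x P).mpr hx)
    (by rw [h, finrank_span_singleton hx0])).symm

structure IsStep (n m : ℕ) (S : Finset ℤ) (τ : ℤ → ℤ) : Prop where
  mapsTo : Set.MapsTo τ S S
  eq_add_or_eq_sub : ∀ j ∈ S, τ j = j + n ∨ τ j = j - m

namespace IsStep

variable {n m : ℕ} {S : Finset ℤ} {τ : ℤ → ℤ} {j : ℤ}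

theorem intCast_iterate (hτ : IsStep n m S τ) (hj : j ∈ S) (i : ℕ) :
    ((τ^[i] j : ℤ) : ZMod (n + m)) = j + i * n := by
  induction i with
  | zero => simp
  | succ i ih =>
    rw [Function.iterate_succ_apply']
    rcases hτ.eq_add_or_eq_sub _ (hτ.mapsTo.iterate i hj) with h | h <;> rw [h] <;> push_cast [ih]
    · ring
    · linear_combination -ZMod.natCast_add_natCast_self n m

theorem iterate_injOn (hτ : IsStep n m S τ) (hcop : n.Coprime m) (hj : j ∈ S) :
    Set.InjOn (fun i => τ^[i] j) (Set.Iio (n + m)) := by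
  intro i hi i' hi' h
  refine ZMod.eq_of_natCast_mul_eq hcop hi hi' ?_
  simpa [hτ.intCast_iterate hj] using congrArg (Int.cast : ℤ → ZMod (n + m)) h

theorem image_iterate_eq (hτ : IsStep n m S τ) (hcop : n.Coprime m) (hcard : S.card ≤ n + m)
    (hj : j ∈ S) : (Finset.range (n + m)).image (fun i => τ^[i] j) = S := by
  refine Finset.eq_of_subset_of_card_le ?_ ?_
  · simpa [Finset.image_subset_iff] using fun i _ => hτ.mapsTo.iterate i hj
  · rwa [Finset.card_image_of_injOn (by simpa using hτ.iterate_injOn hcop hj),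
      Finset.card_range]

theorem card_eq (hτ : IsStep n m S τ) (hcop : n.Coprime m) (hcard : S.card ≤ n + m)
    (hj : j ∈ S) : S.card = n + m := by
  rw [← hτ.image_iterate_eq hcop hcard hj,
    Finset.card_image_of_injOn (by simpa using hτ.iterate_injOn hcop hj), Finset.card_range]

theorem intCast_injOn (hτ : IsStep n m S τ) (hcop : n.Coprime m) (hcard : S.card ≤ n + m) :
    Set.InjOn (Int.cast : ℤ → ZMod (n + m)) S := by
  intro a ha b hb hab
  rw [Finset.mem_coe, ← hτ.image_iterate_eq hcop hcard ha, Finset.mem_image] at hb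
  obtain ⟨i, hi, rfl⟩ := hb
  rw [Finset.mem_range] at hi
  rw [hτ.intCast_iterate ha, left_eq_add, ← zero_mul (n : ZMod (n + m)), ← Nat.cast_zero] at hab
  rw [ZMod.eq_of_natCast_mul_eq hcop hi (by omega) hab, Function.iterate_zero_apply]

theorem iterate_add_self (hτ : IsStep n m S τ) (hcop : n.Coprime m) (hcard : S.card ≤ n + m)
    (hj : j ∈ S) : τ^[n + m] j = j := by
  refine hτ.intCast_injOn hcop hcard (hτ.mapsTo.iterate _ hj) hj ?_
  rw [hτ.intCast_iterate hj]
  push_cast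
  simp [ZMod.natCast_add_natCast_self]

end IsStep

def supportStep (S : Finset ℤ) (n m : ℕ) (j : ℤ) : ℤ :=
  if j + n ∈ S then j + n else j - m

namespace GradedTDM

variable {k : Type} [Field k] {p : ℕ} [ExpChar k p] [PerfectRing k p] {n m : ℕ}
  (Z : GradedTDM k p n m)

def semilinearF : Z.Vsp →ₛₗ[frobenius k p] Z.Vsp where
  toFun := Z.F
  map_add' := Z.F_add
  map_smul' := Z.F_smul

def semilinearVo : Z.Vsp →ₛₗ[((frobeniusEquiv k p).symm : k →+* k)] Z.Vsp where
  toFun := Z.Vo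
  map_add' := Z.Vo_add
  map_smul' := Z.Vo_smul

@[simp]
theorem coe_semilinearF : ⇑Z.semilinearF = Z.F := rfl

@[simp]
theorem coe_semilinearVo : ⇑Z.semilinearVo = Z.Vo := rfl

@[simp]
theorem Vo_zero : Z.Vo 0 = 0 := map_zero Z.semilinearVo

theorem Vo_F (x : Z.Vsp) : Z.Vo (Z.F x) = 0 :=
  (Z.range_F ▸ Set.mem_range_self x : Z.F x ∈ {x | Z.Vo x = 0})

noncomputable instance : DirectSum.Decomposition Z.grading := Z.internal.chooseDecomposition

theorem decompose_Vo (y : Z.Vsp) (j : ℤ) :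
    (DirectSum.decompose Z.grading (Z.Vo y) (j + m) : Z.Vsp) =
      Z.Vo (DirectSum.decompose Z.grading y j) := by
  induction y using DirectSum.Decomposition.inductionOn Z.grading with
  | zero => simp
  | @homogeneous i y =>
    have hVy := Z.Vo_deg i y y.2
    by_cases hij : i = j
    · subst hij
      rw [DirectSum.decompose_of_mem_same _ hVy, DirectSum.decompose_coe, DirectSum.of_eq_same]
    · rw [DirectSum.decompose_of_mem_ne _ hVy (by omega), DirectSum.decompose_of_mem_ne _ y.2 hij,
        Vo_zero]
  | add y y' hy hy' =>
    simp only [Z.Vo_add, DirectSum.decompose_add, DirectSum.add_apply, Submodule.coe_add, hy, hy']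

theorem exists_mem_grading_Vo_eq {x : Z.Vsp} {j : ℤ} (hx : x ∈ Z.grading j) (hFx : Z.F x = 0) :
    ∃ y ∈ Z.grading (j - m), Z.Vo y = x := by
  obtain ⟨y, rfl⟩ : x ∈ Set.range Z.Vo := Z.range_Vo ▸ hFx
  refine ⟨_, (DirectSum.decompose Z.grading y (j - m)).2, ?_⟩
  rw [← decompose_Vo, sub_add_cancel, DirectSum.decompose_of_mem_same _ hx]

noncomputable def support : Finset ℤ :=
  (Submodule.finite_ne_bot_of_iSupIndep Z.internal.submodule_iSupIndep).toFinset

theorem mem_support {j : ℤ} : j ∈ Z.support ↔ Z.grading j ≠ ⊥ :=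
  Set.Finite.mem_toFinset _

theorem sum_finrank_grading : ∑ j ∈ Z.support, finrank k (Z.grading j) = finrank k Z.Vsp := by
  let := Fintype.subtype Z.support fun j => Z.mem_support
  rw [Finset.sum_subtype Z.support fun j => Z.mem_support, ← Module.finrank_directSum,
    (LinearEquiv.ofBijective (DirectSum.coeLinearMap _)
      (DirectSum.isInternal_ne_bot_iff.mpr Z.internal)).finrank_eq]

theorem one_le_finrank_grading {j : ℤ} (hj : j ∈ Z.support) : 1 ≤ finrank k (Z.grading j) :=
  Nat.one_le_iff_ne_zero.mpr (Submodule.finrank_eq_zero.not.mpr (Z.mem_support.mp hj))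

theorem card_support_le : Z.support.card ≤ finrank k Z.Vsp := by
  simpa [Z.sum_finrank_grading] using
    Finset.card_nsmul_le_sum Z.support _ 1 fun j hj => Z.one_le_finrank_grading hj

theorem finrank_grading_eq_one (hcard : Z.support.card = finrank k Z.Vsp) {j : ℤ}
    (hj : j ∈ Z.support) : finrank k (Z.grading j) = 1 := by
  by_contra hne
  have hlt := Finset.sum_lt_sum (fun i hi => Z.one_le_finrank_grading hi)
    ⟨j, hj, lt_of_le_of_ne (Z.one_le_finrank_grading hj) (Ne.symm hne)⟩
  simp [Z.sum_finrank_grading, hcard] at hlt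

theorem support_nonempty (h : 0 < finrank k Z.Vsp) : Z.support.Nonempty := by
  rw [Finset.nonempty_iff_ne_empty]
  rintro hS
  simp [← Z.sum_finrank_grading, hS] at h

theorem add_mem_support_of_F_ne_zero {x : Z.Vsp} {j : ℤ} (hx : x ∈ Z.grading j)
    (hFx : Z.F x ≠ 0) : j + n ∈ Z.support :=
  Z.mem_support.mpr fun h => hFx (by simpa [h] using Z.F_deg j x hx)

theorem sub_mem_support_of_F_eq_zero {x : Z.Vsp} {j : ℤ} (hx : x ∈ Z.grading j) (hx0 : x ≠ 0)
    (hFx : Z.F x = 0) : j - m ∈ Z.support := by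
  obtain ⟨y, hy, rfl⟩ := Z.exists_mem_grading_Vo_eq hx hFx
  exact Z.mem_support.mpr fun h => hx0 (by simp_all)

theorem isStep_supportStep : IsStep n m Z.support (supportStep Z.support n m) where
  mapsTo j hj := by
    unfold supportStep
    split_ifs with hjn
    · exact hjn
    obtain ⟨x, hx, hx0⟩ := Submodule.exists_mem_ne_zero_of_ne_bot (Z.mem_support.mp hj)
    exact Z.sub_mem_support_of_F_eq_zero hx hx0
      (not_not.mp (mt (Z.add_mem_support_of_F_ne_zero hx) hjn))
  eq_add_or_eq_sub j _ := by
    unfold supportStep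
    split_ifs <;> simp

theorem card_support_eq_finrank (hcop : n.Coprime m) (hdim : finrank k Z.Vsp = n + m) :
    Z.support.card = finrank k Z.Vsp := by
  obtain ⟨j, hj⟩ := Z.support_nonempty (hdim ▸ hcop.add_pos)
  exact hdim ▸ Z.isStep_supportStep.card_eq hcop (hdim ▸ Z.card_support_le) hj

theorem sub_notMem_support_of_add_mem (hcop : n.Coprime m) (hdim : finrank k Z.Vsp = n + m)
    {j : ℤ} (hjn : j + n ∈ Z.support) : j - m ∉ Z.support := by
  intro hjm
  have hcast : ((j + n : ℤ) : ZMod (n + m)) = ((j - m : ℤ) : ZMod (n + m)) := by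
    push_cast
    linear_combination ZMod.natCast_add_natCast_self n m
  have := Z.isStep_supportStep.intCast_injOn hcop (hdim ▸ Z.card_support_le) hjn hjm hcast
  have := hcop.add_pos
  omega

theorem exists_step {j : ℤ} (hS : j + n ∈ Z.support → j - m ∉ Z.support)
    {x : Z.Vsp} (hx : x ∈ Z.grading j) (hx0 : x ≠ 0) :
    ∃ y ∈ Z.grading (supportStep Z.support n m j), y ≠ 0 ∧
      Z.F x = (if j + n ∈ Z.support then y else 0) ∧
      Z.Vo y = (if j + n ∈ Z.support then 0 else x) := by
  unfold supportStep
  split_ifs with hjn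
  · have hFx : Z.F x ≠ 0 := fun h => hS hjn (Z.sub_mem_support_of_F_eq_zero hx hx0 h)
    exact ⟨Z.F x, Z.F_deg j x hx, hFx, rfl, Z.Vo_F x⟩
  · have hFx : Z.F x = 0 := not_not.mp (mt (Z.add_mem_support_of_F_ne_zero hx) hjn)
    obtain ⟨y, hy, rfl⟩ := Z.exists_mem_grading_Vo_eq hx hFx
    exact ⟨y, hy, fun h => hx0 (by simp [h]), hFx, rfl⟩

structure IsChain (S : Finset ℤ) (c : ℕ → ℤ) (e : ℕ → Z.Vsp) : Prop where
  mem : ∀ i, e i ∈ Z.grading (c i)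
  ne_zero : ∀ i, e i ≠ 0
  F_apply : ∀ i, Z.F (e i) = if c i + n ∈ S then e (i + 1) else 0
  Vo_apply : ∀ i, Z.Vo (e (i + 1)) = if c i + n ∈ S then 0 else e i

theorem exists_isChain (hS : ∀ j ∈ Z.support, j + n ∈ Z.support → j - m ∉ Z.support) {j₀ : ℤ}
    (hj₀ : j₀ ∈ Z.support) :
    ∃ e, Z.IsChain Z.support (fun i => (supportStep Z.support n m)^[i] j₀) e := by
  set τ := supportStep Z.support n m
  -- the hypotheses sit after `∃ y` so that `choose` yields a total step function
  have hstep (j : ℤ) (x : Z.Vsp) : ∃ y, j ∈ Z.support → x ∈ Z.grading j → x ≠ 0 →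
      y ∈ Z.grading (τ j) ∧ y ≠ 0 ∧ Z.F x = (if j + n ∈ Z.support then y else 0) ∧
        Z.Vo y = (if j + n ∈ Z.support then 0 else x) := by
    by_cases h : j ∈ Z.support ∧ x ∈ Z.grading j ∧ x ≠ 0
    · obtain ⟨y, hy⟩ := Z.exists_step (hS j h.1) h.2.1 h.2.2
      exact ⟨y, fun _ _ _ => hy⟩
    · exact ⟨0, fun h₁ h₂ h₃ => absurd ⟨h₁, h₂, h₃⟩ h⟩
  choose g hg using hstep
  obtain ⟨x₀, hx₀, hx₀0⟩ := Submodule.exists_mem_ne_zero_of_ne_bot (Z.mem_support.mp hj₀)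
  let e : ℕ → Z.Vsp := fun i => Nat.rec x₀ (fun i x => g (τ^[i] j₀) x) i
  have hτ i := Z.isStep_supportStep.mapsTo.iterate i hj₀
  have he (i : ℕ) : e i ∈ Z.grading (τ^[i] j₀) ∧ e i ≠ 0 := by
    induction i with
    | zero => exact ⟨hx₀, hx₀0⟩
    | succ i ih =>
      rw [Function.iterate_succ_apply']
      exact ⟨(hg _ _ (hτ i) ih.1 ih.2).1, (hg _ _ (hτ i) ih.1 ih.2).2.1⟩
  have hge i := (hg _ _ (hτ i) (he i).1 (he i).2).2.2
  exact ⟨e, fun i => (he i).1, fun i => (he i).2, fun i => (hge i).1, fun i => (hge i).2⟩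

namespace IsChain

variable {Z} {S : Finset ℤ} {c : ℕ → ℤ} {e : ℕ → Z.Vsp}

theorem pow_smul (he : Z.IsChain S c e) {μ : k} (hμ : μ ≠ 0) :
    Z.IsChain S c (fun i => μ ^ p ^ i • e i) where
  mem i := Submodule.smul_mem _ _ (he.mem i)
  ne_zero i := smul_ne_zero (pow_ne_zero _ hμ) (he.ne_zero i)
  F_apply i := by
    rw [Z.F_smul, he.F_apply, ← pow_mul, ← pow_succ]
    split_ifs <;> simp
  Vo_apply i := by
    rw [Z.Vo_smul, he.Vo_apply, pow_succ, pow_mul, frobeniusEquiv_symm_pow]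
    split_ifs <;> simp

theorem grading_eq_span (he : Z.IsChain S c e) (hcard : Z.support.card = finrank k Z.Vsp) (i : ℕ) :
    Z.grading (c i) = k ∙ e i := by
  have hi : c i ∈ Z.support := Z.mem_support.mpr fun h => he.ne_zero i (by simpa [h] using he.mem i)
  exact Submodule.eq_span_singleton_of_finrank_eq_one (Z.finrank_grading_eq_one hcard hi)
    (he.mem i) (he.ne_zero i)

theorem linearIndependent (he : Z.IsChain S c e) {N : ℕ} (hc : Set.InjOn c (Set.Iio N)) :
    LinearIndependent k (fun i : Fin N => e i) :=
  iSupIndep.linearIndependent _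
    (Z.internal.submodule_iSupIndep.comp fun i i' h => Fin.ext (hc i.2 i'.2 h))
    (fun i => he.mem i) (fun i => he.ne_zero i)

theorem exists_linearEquiv {Z₁ Z₂ : GradedTDM k p n m} {e₁ : ℕ → Z₁.Vsp} {e₂ : ℕ → Z₂.Vsp}
    (h₁ : Z₁.IsChain S c e₁) (h₂ : Z₂.IsChain S c e₂) {N : ℕ} (hc : Set.InjOn c (Set.Iio N))
    (hdim₁ : finrank k Z₁.Vsp = N) (hdim₂ : finrank k Z₂.Vsp = N) (hN : 0 < N)
    (hper₁ : e₁ N = e₁ 0) (hper₂ : e₂ N = e₂ 0) :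
    ∃ φ : Z₁.Vsp ≃ₗ[k] Z₂.Vsp, (∀ i < N, φ (e₁ i) = e₂ i) ∧
      (∀ x, φ (Z₁.F x) = Z₂.F (φ x)) ∧ (∀ x, φ (Z₁.Vo x) = Z₂.Vo (φ x)) := by
  obtain ⟨M, rfl⟩ : ∃ M, N = M + 1 := ⟨N - 1, by omega⟩
  let b₁ := basisOfLinearIndependentOfCardEqFinrank' _ (h₁.linearIndependent hc) (by simp [hdim₁])
  let b₂ := basisOfLinearIndependentOfCardEqFinrank' _ (h₂.linearIndependent hc) (by simp [hdim₂])
  let φ := b₁.equiv b₂ (Equiv.refl _)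
  have hφ : ∀ i ≤ M + 1, φ (e₁ i) = e₂ i := by
    intro i hi
    rcases hi.lt_or_eq with hi | rfl
    · simpa [b₁, b₂] using b₁.equiv_apply ⟨i, hi⟩ b₂ (Equiv.refl _)
    · rw [hper₁, hper₂]
      simpa [b₁, b₂] using b₁.equiv_apply ⟨0, hN⟩ b₂ (Equiv.refl _)
  have hF (i : ℕ) (hi : i ≤ M) : φ (Z₁.F (e₁ i)) = Z₂.F (φ (e₁ i)) := by
    rw [h₁.F_apply, hφ i (by omega), h₂.F_apply]
    split_ifs
    exacts [hφ (i + 1) (by omega), map_zero φ]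
  have hV (i : ℕ) (hi : i ≤ M) : φ (Z₁.Vo (e₁ i)) = Z₂.Vo (φ (e₁ i)) := by
    obtain ⟨j, hj, hij⟩ : ∃ j ≤ M, e₁ i = e₁ (j + 1) := by
      rcases i with _ | i
      exacts [⟨M, le_rfl, hper₁.symm⟩, ⟨i, by omega, rfl⟩]
    rw [hij, h₁.Vo_apply, hφ (j + 1) (by omega), h₂.Vo_apply]
    split_ifs
    exacts [map_zero φ, hφ j (by omega)]
  refine ⟨φ, fun i hi => hφ i hi.le, fun x => ?_, fun x => ?_⟩
  · refine LinearMap.congr_fun (b₁.ext (f₁ := φ.toLinearMap.comp Z₁.semilinearF)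
      (f₂ := Z₂.semilinearF.comp φ.toLinearMap) fun i => ?_) x
    simpa [b₁] using hF i (by omega)
  · refine LinearMap.congr_fun (b₁.ext (f₁ := φ.toLinearMap.comp Z₁.semilinearVo)
      (f₂ := Z₂.semilinearVo.comp φ.toLinearMap) fun i => ?_) x
    simpa [b₁] using hV i (by omega)

end IsChain

theorem exists_isChain_periodic [IsAlgClosed k] [Fact p.Prime] (hcop : n.Coprime m)
    (hdim : finrank k Z.Vsp = n + m) {j₀ : ℤ} (hj₀ : j₀ ∈ Z.support) :
    ∃ e, Z.IsChain Z.support (fun i => (supportStep Z.support n m)^[i] j₀) e ∧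
      e (n + m) = e 0 := by
  obtain ⟨e, he⟩ := Z.exists_isChain (fun j _ => Z.sub_notMem_support_of_add_mem hcop hdim) hj₀
  have hline : Z.grading j₀ = k ∙ e 0 :=
    he.grading_eq_span (Z.card_support_eq_finrank hcop hdim) 0
  have hmem : e (n + m) ∈ Z.grading j₀ := by
    simpa [Z.isStep_supportStep.iterate_add_self hcop (hdim ▸ Z.card_support_le) hj₀]
      using he.mem (n + m)
  obtain ⟨a, ha⟩ := Submodule.mem_span_singleton.mp (hline ▸ hmem)
  have ha0 : a ≠ 0 := by
    rintro rfl
    exact he.ne_zero (n + m) (by simp [← ha])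
  have hp : 1 < p ^ (n + m) := Nat.one_lt_pow hcop.add_pos.ne' (Fact.out : p.Prime).one_lt
  obtain ⟨μ, hμ⟩ := IsAlgClosed.exists_pow_nat_eq a⁻¹ (Nat.sub_pos_of_lt hp)
  have hμ0 : μ ≠ 0 := by
    rintro rfl
    exact ha0 (by simpa [zero_pow (Nat.sub_pos_of_lt hp).ne', eq_comm] using hμ)
  refine ⟨_, he.pow_smul hμ0, ?_⟩
  simp only [← ha, smul_smul, pow_zero, pow_one]
  congr 1
  calc μ ^ p ^ (n + m) * a = μ ^ (p ^ (n + m) - 1) * μ * a := by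
        rw [← pow_succ, Nat.sub_add_cancel hp.le]
    _ = μ := by rw [hμ]; field_simp

end GradedTDM

theorem stmt17_general (k : Type) [Field k] [IsAlgClosed k] (p : ℕ) [Fact p.Prime]
    [ExpChar k p] [PerfectRing k p] (n m : ℕ) (hcop : Nat.Coprime n m)
    (h : ℕ) (hh : h = n + m)
    (Z₁ Z₂ : GradedTDM k p n m)
    (hdim₁ : Module.finrank k Z₁.Vsp = h) (hdim₂ : Module.finrank k Z₂.Vsp = h)
    (hsupp : {j : ℤ | Z₁.grading j ≠ ⊥} = {j : ℤ | Z₂.grading j ≠ ⊥}) :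
    ∃ φ : Z₁.Vsp ≃ₗ[k] Z₂.Vsp,
      (∀ j : ℤ, (Z₁.grading j).map (φ : Z₁.Vsp →ₗ[k] Z₂.Vsp) = Z₂.grading j) ∧
      (∀ x, φ (Z₁.F x) = Z₂.F (φ x)) ∧
      (∀ x, φ (Z₁.Vo x) = Z₂.Vo (φ x)) := by
  subst hh
  have hS : Z₂.support = Z₁.support := by
    ext j
    simpa [GradedTDM.mem_support] using (Set.ext_iff.mp hsupp j).symm
  obtain ⟨j₀, hj₀⟩ := Z₁.support_nonempty (hdim₁ ▸ hcop.add_pos)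
  obtain ⟨e₁, he₁, hper₁⟩ := Z₁.exists_isChain_periodic hcop hdim₁ hj₀
  obtain ⟨e₂, he₂, hper₂⟩ := Z₂.exists_isChain_periodic hcop hdim₂ (hS ▸ hj₀)
  rw [hS] at he₂
  have hτ := Z₁.isStep_supportStep
  have hcard := hdim₁ ▸ Z₁.card_support_le
  obtain ⟨φ, hφ, hF, hV⟩ := he₁.exists_linearEquiv he₂ (hτ.iterate_injOn hcop hj₀)
    hdim₁ hdim₂ hcop.add_pos hper₁ hper₂
  refine ⟨φ, fun j => ?_, hF, hV⟩
  by_cases hj : j ∈ Z₁.support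
  · obtain ⟨i, hi, rfl⟩ := Finset.mem_image.mp (hτ.image_iterate_eq hcop hcard hj₀ ▸ hj)
    rw [he₁.grading_eq_span (Z₁.card_support_eq_finrank hcop hdim₁),
      he₂.grading_eq_span (Z₂.card_support_eq_finrank hcop hdim₂),
      Submodule.map_span, Set.image_singleton, LinearEquiv.coe_coe, hφ i (Finset.mem_range.mp hi)]
  · have h₂ : j ∉ Z₂.support := hS ▸ hj
    rw [GradedTDM.mem_support, not_not] at hj h₂
    rw [hj, h₂, Submodule.map_bot]

theorem stmt17 (k : Type) [Field k] [IsAlgClosed k] (p : ℕ) [Fact p.Prime] [CharP k p]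
    [ExpChar k p] [PerfectRing k p] (n m : ℕ) (hcop : Nat.Coprime n m)
    (hnm : n ≠ m) (h : ℕ) (hh : h = n + m) (hh1 : 1 ≤ h)
    (Z₁ Z₂ : GradedTDM k p n m)
    (hdim₁ : Module.finrank k Z₁.Vsp = h) (hdim₂ : Module.finrank k Z₂.Vsp = h)
    (hsupp : {j : ℤ | Z₁.grading j ≠ ⊥} = {j : ℤ | Z₂.grading j ≠ ⊥}) :
    ∃ φ : Z₁.Vsp ≃ₗ[k] Z₂.Vsp,
      (∀ j : ℤ, (Z₁.grading j).map (φ : Z₁.Vsp →ₗ[k] Z₂.Vsp) = Z₂.grading j) ∧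
      (∀ x, φ (Z₁.F x) = Z₂.F (φ x)) ∧
      (∀ x, φ (Z₁.Vo x) = Z₂.Vo (φ x)) :=
  stmt17_general k p n m hcop h hh Z₁ Z₂ hdim₁ hdim₂ hsupp
end
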